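/- arXiv:1006.5223 — 7 statements merged into one kernel-verified Lean document; each statement's English description precedes it below -/
import Mathlib

section
/- Let (x,y,z) ∈ ℝ³. There exist g, h ∈ SL(2,ℝ) with (Tr g, Tr h, Tr (g·h)) = (x,y,z) if and only if x² + y² + z² − xyz − 2 ≥ 2, or at least one of |x|, |y|, |z| is ≥ 2. -/
/-- The trace of an element of SL(2,ℝ), viewed as a 2×2 real matrix. -/
def trSL (g : Matrix.SpecialLinearGroup (Fin 2) ℝ) : ℝ :=
  Matrix.trace (g : Matrix (Fin 2) (Fin 2) ℝ)

/-!
The quantity `x² + y² + z² - xyz - 2` is the trace of the commutator `g h g⁻¹ h⁻¹`, and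
`x² + y² + z² - xyz - 4 = -det (g h - h g)`. On traceless matrices `-det` is a Lorentzian quadratic
form whose polar form is `trace (v w) / 2`; when `|tr g| < 2` the traceless part of `g` is
timelike and `g h - h g` is orthogonal to it, hence spacelike, which gives necessity.
Conversely the triple is realised by explicit matrices when `|z| ≥ 2` or when `|x| < 2` and the
discriminant condition holds, and the moves `(g, h) ↦ (h, g)` and `(g, h) ↦ (g h, h⁻¹)` permute
the traces to cover the remaining cases.
-/

open Matrix
open scoped MatrixGroups

section TwoByTwo

variable {R : Type*} [CommRing R]

theorem Matrix.det_mul_sub_mul_fin_two (A B : Matrix (Fin 2) (Fin 2) R) :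
    (A * B - B * A).det = 4 * A.det * B.det - B.det * A.trace ^ 2 - A.det * B.trace ^ 2
      - (A * B).trace ^ 2 + A.trace * B.trace * (A * B).trace := by
  simp [det_fin_two, trace_fin_two, mul_apply, Fin.sum_univ_two]
  ring

theorem Matrix.det_nonpos_of_trace_mul_eq_zero [LinearOrder R] [IsStrictOrderedRing R]
    {v w : Matrix (Fin 2) (Fin 2) R} (hv : v.trace = 0) (hw : w.trace = 0) (hdet : 0 < v.det)
    (hvw : (v * w).trace = 0) : w.det ≤ 0 := by
  rw [trace_fin_two, add_eq_zero_iff_eq_neg'] at hv hw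
  rw [det_fin_two, hv] at hdet
  rw [det_fin_two, hw]
  simp only [trace_fin_two, mul_apply, Fin.sum_univ_two, hv, hw] at hvw
  set α := v 0 0; set β := v 0 1; set γ := v 1 0
  set α' := w 0 0; set β' := w 0 1; set γ' := w 1 0
  have hβγ : 0 < β ^ 2 + γ ^ 2 := by nlinarith [sq_nonneg α, sq_nonneg (β + γ)]
  have hsos : (β ^ 2 + γ ^ 2) * (α' ^ 2 + β' * γ') =
      (β * α' - α * β') ^ 2 + (γ * α' - α * γ') ^ 2 + (α * -α - β * γ) * (β' ^ 2 + γ' ^ 2) := by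
    linear_combination (β * β' + γ * γ') * hvw
  have hsum : 0 ≤ (β ^ 2 + γ ^ 2) * (α' ^ 2 + β' * γ') :=
    hsos ▸ add_nonneg (by positivity) (mul_nonneg hdet.le (by positivity))
  linarith [nonneg_of_mul_nonneg_right hsum hβγ]

theorem Matrix.four_le_fricke_of_sq_trace_lt_four [LinearOrder R] [IsStrictOrderedRing R]
    {A B : Matrix (Fin 2) (Fin 2) R} (hA : A.det = 1) (hB : B.det = 1) (hA2 : A.trace ^ 2 < 4) :
    4 ≤ A.trace ^ 2 + B.trace ^ 2 + (A * B).trace ^ 2 - A.trace * B.trace * (A * B).trace := by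
  have hcomm := det_mul_sub_mul_fin_two A B
  rw [hA, hB] at hcomm
  set v := (2 : R) • A - A.trace • 1
  have hv : v.trace = 0 := by
    simp [v, trace_sub]
    ring
  have hvdet : v.det = 4 - A.trace ^ 2 := by
    rw [det_fin_two] at hA ⊢
    simp [v, trace_fin_two]
    linear_combination 4 * hA
  have hvw : (v * (A * B - B * A)).trace = 0 := by
    simp [v, sub_mul, mul_sub, trace_sub, ← mul_assoc, trace_mul_cycle A B A, trace_mul_comm B A]
  have hw : (A * B - B * A).trace = 0 := by simp [trace_sub, trace_mul_comm A B]
  have := det_nonpos_of_trace_mul_eq_zero hv hw (by linarith) hvw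
  linarith

end TwoByTwo

def mkSL2 (a b c d : ℝ) (h : a * d - b * c = 1) : SL(2, ℝ) :=
  ⟨!![a, b; c, d], by rwa [det_fin_two_of]⟩

lemma trSL_mkSL2 {a b c d : ℝ} (h : a * d - b * c = 1) : trSL (mkSL2 a b c d h) = a + d := by
  simp [trSL, mkSL2, trace_fin_two_of]

lemma trSL_mkSL2_mul_mkSL2 {a b c d p q r s : ℝ} (h₁ : a * d - b * c = 1)
    (h₂ : p * s - q * r = 1) :
    trSL (mkSL2 a b c d h₁ * mkSL2 p q r s h₂) = a * p + b * r + (c * q + d * s) := by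
  rw [trSL, Matrix.SpecialLinearGroup.coe_mul]
  simp [mkSL2, trace_fin_two_of]

lemma trSL_inv (g : SL(2, ℝ)) : trSL g⁻¹ = trSL g := by
  rw [trSL, trSL, Matrix.SpecialLinearGroup.coe_inv, adjugate_fin_two, trace_fin_two_of,
    trace_fin_two]
  ring

lemma trSL_mul_comm (g h : SL(2, ℝ)) : trSL (g * h) = trSL (h * g) := by
  rw [trSL, trSL, Matrix.SpecialLinearGroup.coe_mul, Matrix.SpecialLinearGroup.coe_mul,
    trace_mul_comm]

def IsTraceTriple (x y z : ℝ) : Prop :=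
  ∃ g h : SL(2, ℝ), trSL g = x ∧ trSL h = y ∧ trSL (g * h) = z

namespace IsTraceTriple

variable {x y z : ℝ}

lemma swap_left (hxyz : IsTraceTriple x y z) : IsTraceTriple y x z := by
  obtain ⟨g, h, hg, hh, hgh⟩ := hxyz
  exact ⟨h, g, hh, hg, trSL_mul_comm g h ▸ hgh⟩

lemma swap_outer (hxyz : IsTraceTriple x y z) : IsTraceTriple z y x := by
  obtain ⟨g, h, hg, hh, hgh⟩ := hxyz
  exact ⟨g * h, h⁻¹, hgh, trSL_inv h ▸ hh, by rwa [mul_inv_cancel_right]⟩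

end IsTraceTriple

lemma isTraceTriple_of_two_le_abs_right {x y z : ℝ} (hz : 2 ≤ |z|) :
    IsTraceTriple x y z := by
  set s := √(z ^ 2 - 4)
  have hs : s ^ 2 = z ^ 2 - 4 := Real.sq_sqrt (by nlinarith [sq_abs z])
  have hg : x * 0 - (-1) * 1 = 1 := by ring
  have hh : 0 * y - (z + s) / 2 * (-((z - s) / 2)) = 1 := by linear_combination -hs / 4
  refine ⟨mkSL2 x (-1) 1 0 hg, mkSL2 0 ((z + s) / 2) (-((z - s) / 2)) y hh, ?_, ?_, ?_⟩
  · rw [trSL_mkSL2]; ring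
  · rw [trSL_mkSL2]; ring
  · rw [trSL_mkSL2_mul_mkSL2]; ring

lemma isTraceTriple_of_two_le_abs_left {x y z : ℝ} (hx : 2 ≤ |x|) :
    IsTraceTriple x y z :=
  (isTraceTriple_of_two_le_abs_right hx).swap_outer

/-- Take `g` a scaled rotation of trace `x` and `h` with diagonal `(y/2, y/2)`; the
off-diagonal entries of `h` are then the roots of a quadratic whose discriminant is a positive
multiple of `x² + y² + z² - xyz - 4`. -/
lemma isTraceTriple_of_abs_lt_two {x y z : ℝ} (hx : |x| < 2)
    (hκ : 4 ≤ x ^ 2 + y ^ 2 + z ^ 2 - x * y * z) : IsTraceTriple x y z := by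
  have hx2 : 0 < 4 - x ^ 2 := by nlinarith [abs_lt.mp hx]
  set s := √(4 - x ^ 2)
  have hs : s ^ 2 = 4 - x ^ 2 := Real.sq_sqrt hx2.le
  have hs0 : 0 < s := Real.sqrt_pos.mpr hx2
  set δ := (2 * z - x * y) / s
  have hδ : δ * s = 2 * z - x * y := div_mul_cancel₀ _ hs0.ne'
  have hdisc : 0 ≤ δ ^ 2 + y ^ 2 - 4 := by
    have h : (δ ^ 2 + y ^ 2 - 4) * s ^ 2 = 4 * (x ^ 2 + y ^ 2 + z ^ 2 - x * y * z - 4) := by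
      linear_combination (δ * s + 2 * z - x * y) * hδ + (y ^ 2 - 4) * hs
    exact nonneg_of_mul_nonneg_left (by rw [h]; linarith) (pow_pos hs0 2)
  set t := √(δ ^ 2 + y ^ 2 - 4)
  have ht : t ^ 2 = δ ^ 2 + y ^ 2 - 4 := Real.sq_sqrt hdisc
  have hg : x / 2 * (x / 2) - -(s / 2) * (s / 2) = 1 := by linear_combination hs / 4
  have hh : y / 2 * (y / 2) - (t + δ) / 2 * ((t - δ) / 2) = 1 := by linear_combination -ht / 4
  refine ⟨mkSL2 (x / 2) (-(s / 2)) (s / 2) (x / 2) hg,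
    mkSL2 (y / 2) ((t + δ) / 2) ((t - δ) / 2) (y / 2) hh, ?_, ?_, ?_⟩
  · rw [trSL_mkSL2]; ring
  · rw [trSL_mkSL2]; ring
  · rw [trSL_mkSL2_mul_mkSL2]; linear_combination hδ / 2

/-- For `(x,y,z) ∈ ℝ³`, there exist `g, h ∈ SL(2,ℝ)` with
`(Tr g, Tr h, Tr (g·h)) = (x,y,z)` if and only if
`x² + y² + z² − xyz − 2 ≥ 2`, or at least one of `|x|, |y|, |z|` is `≥ 2`. -/
theorem stmt0 (x y z : ℝ) :
    (∃ g h : Matrix.SpecialLinearGroup (Fin 2) ℝ,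
        trSL g = x ∧ trSL h = y ∧ trSL (g * h) = z) ↔
      (x ^ 2 + y ^ 2 + z ^ 2 - x * y * z - 2 ≥ 2 ∨ |x| ≥ 2 ∨ |y| ≥ 2 ∨ |z| ≥ 2) := by
  constructor
  · rintro ⟨g, h, rfl, rfl, rfl⟩
    rcases lt_or_ge |trSL g| 2 with hg | hg
    · left
      have := four_le_fricke_of_sq_trace_lt_four g.det_coe h.det_coe
        (by nlinarith [abs_lt.mp hg] : trSL g ^ 2 < 4)
      rw [trSL, trSL, trSL, Matrix.SpecialLinearGroup.coe_mul]
      linarith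
    · exact Or.inr (Or.inl hg)
  · rintro (hκ | hx | hy | hz)
    · rcases lt_or_ge |x| 2 with hx | hx
      · exact isTraceTriple_of_abs_lt_two hx (by linarith)
      · exact isTraceTriple_of_two_le_abs_left hx
    · exact isTraceTriple_of_two_le_abs_left hx
    · exact (isTraceTriple_of_two_le_abs_left hy).swap_left
    · exact isTraceTriple_of_two_le_abs_right hz
end

section
/- Let g, h ∈ SL(2,ℝ). Then Tr(g·h·g⁻¹·h⁻¹) < 2 if and only if g·h ≠ h·g and there exists e ∈ SL(2,ℝ) with Tr e = 0 such that e·g·e⁻¹ = g⁻¹ and e·h·e⁻¹ = h⁻¹. (Geometrically, the elements e ∈ SL(2,ℝ) with Tr e = 0 are exactly the half-turns about points of the hyperbolic plane, and such an e conjugating a nontrivial isometry to its inverse forces that isometry to be hyperbolic with axis through the centre of e; so the right-hand condition says exactly that g and h are hyperbolic isometries whose axes cross.) -/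
/-!
Put `C = gh - hg`. Polarizing the determinant of 2×2 matrices,
`det (X - Y) = det X + det Y - tr (X adj Y)`, gives `Tr[g,h] = 2 - det C`, so the left-hand side
says `det C > 0`.

Because `adj X = (tr X) 1 - X` for 2×2 matrices, `C g = g⁻¹ C` and `C h = h⁻¹ C`; hence if
`det C > 0`, then `C / √(det C)` is a half-turn inverting `g` and `h`. Conversely, a half-turn `e`
inverting `g` and `h` commutes with `C`. Traceless 2×2 matrices satisfy `XY + YX = tr (XY) 1`,
and `e² = -1`, so `2C = -tr (Ce) e` and `4 det C = tr (Ce)²`, which is positive unless `C = 0`.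
-/

open Matrix

namespace Matrix

variable {R : Type*} [CommRing R]

lemma adjugate_fin_two_eq_trace_smul_sub (A : Matrix (Fin 2) (Fin 2) R) :
    adjugate A = trace A • (1 : Matrix (Fin 2) (Fin 2) R) - A := by
  ext i j
  fin_cases i <;> fin_cases j <;> simp [adjugate_fin_two, trace_fin_two]

lemma adjugate_fin_two_of_trace_eq_zero {A : Matrix (Fin 2) (Fin 2) R} (hA : trace A = 0) :
    adjugate A = -A := by
  rw [adjugate_fin_two_eq_trace_smul_sub, hA, zero_smul, zero_sub]

lemma mul_self_fin_two_of_trace_eq_zero {A : Matrix (Fin 2) (Fin 2) R} (hA : trace A = 0) :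
    A * A = -(det A • (1 : Matrix (Fin 2) (Fin 2) R)) := by
  rw [← mul_adjugate, adjugate_fin_two_of_trace_eq_zero hA, mul_neg, neg_neg]

lemma mul_add_mul_fin_two_of_trace_eq_zero {X Y : Matrix (Fin 2) (Fin 2) R}
    (hX : trace X = 0) (hY : trace Y = 0) :
    X * Y + Y * X = trace (X * Y) • (1 : Matrix (Fin 2) (Fin 2) R) := by
  have h := adjugate_fin_two_eq_trace_smul_sub (X * Y)
  rw [adjugate_mul_distrib, adjugate_fin_two_of_trace_eq_zero hX,
    adjugate_fin_two_of_trace_eq_zero hY, neg_mul_neg] at h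
  rw [h, add_sub_cancel]

lemma det_fin_two_sub (X Y : Matrix (Fin 2) (Fin 2) R) :
    det (X - Y) = det X + det Y - trace (X * adjugate Y) := by
  simp only [det_fin_two, adjugate_fin_two, trace_fin_two, mul_apply, Fin.sum_univ_two, sub_apply,
    of_apply, cons_val', cons_val_zero, cons_val_fin_one, cons_val_one]
  ring

lemma trace_commutator_fin_two {a b : Matrix (Fin 2) (Fin 2) R} (ha : det a = 1)
    (hb : det b = 1) : trace (a * b * adjugate a * adjugate b) = 2 - det (a * b - b * a) := by
  rw [det_fin_two_sub, adjugate_mul_distrib, det_mul, det_mul, ha, hb]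
  simp only [mul_assoc]
  ring

lemma commutator_mul_left_eq_adjugate_mul_fin_two (a b : Matrix (Fin 2) (Fin 2) R) :
    (a * b - b * a) * a = adjugate a * (a * b - b * a) := by
  have hsq : a * a = trace a • a - det a • (1 : Matrix (Fin 2) (Fin 2) R) := by
    rw [← mul_adjugate, adjugate_fin_two_eq_trace_smul_sub, mul_sub, mul_smul_comm, mul_one,
      sub_sub_cancel]
  rw [adjugate_fin_two_eq_trace_smul_sub]
  simp only [sub_mul, mul_sub, smul_mul_assoc, one_mul, mul_assoc]
  rw [← mul_assoc a a b, hsq]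
  simp only [sub_mul, mul_sub, smul_mul_assoc, mul_smul_comm, one_mul, mul_one]
  abel

lemma commutator_mul_right_eq_adjugate_mul_fin_two (a b : Matrix (Fin 2) (Fin 2) R) :
    (a * b - b * a) * b = adjugate b * (a * b - b * a) := by
  rw [← neg_sub, neg_mul, mul_neg, commutator_mul_left_eq_adjugate_mul_fin_two]

lemma commute_commutator_fin_two_of_mul_eq_adjugate_mul {e a b : Matrix (Fin 2) (Fin 2) R}
    (ha : e * a = adjugate a * e) (hb : e * b = adjugate b * e) :
    Commute e (a * b - b * a) := by
  have hadj : adjugate a * adjugate b - adjugate b * adjugate a = a * b - b * a := by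
    rw [← adjugate_mul_distrib, ← adjugate_mul_distrib, adjugate_fin_two_eq_trace_smul_sub,
      adjugate_fin_two_eq_trace_smul_sub (a * b), trace_mul_comm]
    abel
  calc e * (a * b - b * a) = (adjugate a * adjugate b - adjugate b * adjugate a) * e := by
        simp only [mul_sub, sub_mul, ← mul_assoc, ha, hb]
        simp only [mul_assoc, ha, hb]
    _ = (a * b - b * a) * e := by rw [hadj]

lemma two_smul_eq_neg_trace_mul_smul_fin_two {C e : Matrix (Fin 2) (Fin 2) R}
    (hC : trace C = 0) (he : trace e = 0) (hdet : det e = 1) (hCe : Commute C e) :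
    (2 : R) • C = -(trace (C * e) • e) := by
  have hee : e * e = -1 := by rw [mul_self_fin_two_of_trace_eq_zero he, hdet, one_smul]
  calc (2 : R) • C = -((C * e + e * C) * e) := by
        rw [← hCe.eq, ← two_smul R, smul_mul_assoc, mul_assoc, hee, mul_neg, mul_one, smul_neg, neg_neg]
    _ = -(trace (C * e) • e) := by
        rw [mul_add_mul_fin_two_of_trace_eq_zero hC he, smul_mul_assoc, one_mul]

lemma four_mul_det_eq_sq_trace_mul_fin_two {C e : Matrix (Fin 2) (Fin 2) R}
    (hC : trace C = 0) (he : trace e = 0) (hdet : det e = 1) (hCe : Commute C e) :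
    4 * det C = trace (C * e) ^ 2 := by
  have h := congrArg det (two_smul_eq_neg_trace_mul_smul_fin_two hC he hdet hCe)
  rw [det_smul, det_neg, det_smul, hdet] at h
  simp only [Fintype.card_fin, even_two, Even.neg_pow, one_pow, mul_one] at h
  linear_combination h

lemma det_commutator_pos_of_mul_eq_adjugate_mul {K : Type*} [Field K] [LinearOrder K]
    [IsStrictOrderedRing K] {e a b : Matrix (Fin 2) (Fin 2) K} (hab : a * b ≠ b * a)
    (he : trace e = 0) (hdet : det e = 1)
    (ha : e * a = adjugate a * e) (hb : e * b = adjugate b * e) :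
    0 < det (a * b - b * a) := by
  have hC : trace (a * b - b * a) = 0 := LieAlgebra.matrix_trace_commutator_zero _ _ a b
  have hCe := (commute_commutator_fin_two_of_mul_eq_adjugate_mul ha hb).symm
  have ht : trace ((a * b - b * a) * e) ≠ 0 := by
    intro ht
    have h2C := two_smul_eq_neg_trace_mul_smul_fin_two hC he hdet hCe
    rw [ht, zero_smul, neg_zero, smul_eq_zero] at h2C
    exact hab (sub_eq_zero.mp (h2C.resolve_left two_ne_zero))
  have h4 := four_mul_det_eq_sq_trace_mul_fin_two hC he hdet hCe
  have : 0 < trace ((a * b - b * a) * e) ^ 2 := by positivity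
  linarith

lemma det_inv_sqrt_det_smul_fin_two {A : Matrix (Fin 2) (Fin 2) ℝ} (hA : 0 < det A) :
    det ((√(det A))⁻¹ • A) = 1 := by
  rw [det_smul, Fintype.card_fin, inv_pow, Real.sq_sqrt hA.le, inv_mul_cancel₀ hA.ne']

namespace SpecialLinearGroup

variable {n : Type*} [Fintype n] [DecidableEq n]

lemma mul_comm_iff_coe {g h : SpecialLinearGroup n R} :
    g * h = h * g ↔ (g * h : Matrix n n R) = h * g := by
  rw [← coe_mul, ← coe_mul]
  exact Subtype.val_injective.eq_iff.symm

lemma mul_mul_inv_eq_inv_iff {e g : SpecialLinearGroup n R} :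
    e * g * e⁻¹ = g⁻¹ ↔
      (e : Matrix n n R) * (g : Matrix n n R) = adjugate (g : Matrix n n R) * e := by
  rw [mul_inv_eq_iff_eq_mul, ← coe_inv, ← coe_mul, ← coe_mul]
  exact Subtype.val_injective.eq_iff.symm

lemma exists_halfTurn_of_det_commutator_pos {a b : Matrix (Fin 2) (Fin 2) ℝ}
    (hD : 0 < det (a * b - b * a)) :
    ∃ e : SpecialLinearGroup (Fin 2) ℝ, trace (e : Matrix (Fin 2) (Fin 2) ℝ) = 0 ∧
      (e : Matrix (Fin 2) (Fin 2) ℝ) * a = adjugate a * e ∧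
      (e : Matrix (Fin 2) (Fin 2) ℝ) * b = adjugate b * e := by
  refine ⟨⟨_, det_inv_sqrt_det_smul_fin_two hD⟩, ?_, ?_, ?_⟩ <;> simp only
  · rw [trace_smul, show trace (a * b - b * a) = 0 from
      LieAlgebra.matrix_trace_commutator_zero _ _ a b, smul_zero]
  · rw [smul_mul_assoc, mul_smul_comm, commutator_mul_left_eq_adjugate_mul_fin_two]
  · rw [smul_mul_assoc, mul_smul_comm, commutator_mul_right_eq_adjugate_mul_fin_two]

end SpecialLinearGroup

end Matrix

lemma trSL_commutator (g h : SpecialLinearGroup (Fin 2) ℝ) :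
    trSL (g * h * g⁻¹ * h⁻¹) = 2 - det (g * h - h * g : Matrix (Fin 2) (Fin 2) ℝ) :=
  trace_commutator_fin_two g.2 h.2

/-- `Tr[g,h] < 2` if and only if `g` and `h` do not commute and there is a
half-turn `e` (an element of `SL(2,ℝ)` of trace 0) conjugating each of `g`, `h`
to its inverse. -/
theorem stmt3 (g h : Matrix.SpecialLinearGroup (Fin 2) ℝ) :
    trSL (g * h * g⁻¹ * h⁻¹) < 2 ↔
      (g * h ≠ h * g ∧ ∃ e : Matrix.SpecialLinearGroup (Fin 2) ℝ,
        trSL e = 0 ∧ e * g * e⁻¹ = g⁻¹ ∧ e * h * e⁻¹ = h⁻¹) := by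
  simp only [trSL_commutator, sub_lt_self_iff, ne_eq, SpecialLinearGroup.mul_comm_iff_coe,
    SpecialLinearGroup.mul_mul_inv_eq_inv_iff]
  constructor
  · intro hD
    refine ⟨fun hab => ?_, SpecialLinearGroup.exists_halfTurn_of_det_commutator_pos hD⟩
    simp [hab] at hD
  · rintro ⟨hab, e, he, hg, hh⟩
    exact det_commutator_pos_of_mul_eq_adjugate_mul hab he e.2 hg hh
end

section
/- Let g, h ∈ SL(2,ℝ). If g is elliptic, i.e. |Tr g| < 2, and Tr(g·h·g⁻¹·h⁻¹) = 2, then g·h = h·g. -/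
namespace Matrix

variable {R : Type*}

theorem det_sub_one_fin_two [CommRing R] (C : Matrix (Fin 2) (Fin 2) R) :
    (C - 1).det = C.det - C.trace + 1 := by
  simp only [det_fin_two, trace_fin_two, sub_apply, one_apply_eq, one_apply_ne zero_ne_one,
    one_apply_ne one_ne_zero]
  ring

theorem eq_zero_of_trace_mul_eq_zero_fin_two [CommRing R] [LinearOrder R] [IsStrictOrderedRing R]
    {X K : Matrix (Fin 2) (Fin 2) R} (hX : X.trace ^ 2 < 4 * X.det)
    (hK_trace : K.trace = 0) (hK_det : K.det = 0) (hXK : (X * K).trace = 0) : K = 0 := by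
  simp only [trace_fin_two, det_fin_two, mul_apply, Fin.sum_univ_two] at hX hK_trace hK_det hXK
  set u := X 0 0 - X 1 1
  set b := X 0 1
  set c := X 1 0
  set p := K 0 0
  set q := K 0 1
  set r := K 1 0
  have hK11 : K 1 1 = -p := by linear_combination hK_trace
  rw [hK11] at hK_det hXK
  have h_ell : u ^ 2 + 4 * (b * c) < 0 := by linear_combination hX
  have h_null : p ^ 2 + q * r = 0 := by linear_combination -hK_det
  have h_orth : u * p + b * r + c * q = 0 := by linear_combination hXK
  have hbc : b * c < 0 := by nlinarith [sq_nonneg u]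
  -- Eliminating `p`: `(b r + c q)² + u² q r = 0`, while `q r ≥ 0` since `b c < 0`.
  have h_elim : (b * r + c * q) ^ 2 + u ^ 2 * (q * r) = 0 := by
    linear_combination (b * r + c * q - u * p) * h_orth + u ^ 2 * h_null
  have hqr_nonneg : 0 ≤ q * r := by nlinarith [sq_nonneg (b * r - c * q)]
  have hp : p = 0 := by nlinarith [sq_nonneg p]
  have hqr : q * r = 0 := by linear_combination h_null - p * hp
  have hsum : (b * r + c * q) ^ 2 = 0 := by linear_combination h_elim - u ^ 2 * hqr
  replace hsum := pow_eq_zero_iff two_ne_zero |>.1 hsum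
  have hbr : b * r = 0 :=
    pow_eq_zero_iff two_ne_zero |>.1 (by linear_combination b * r * hsum - b * c * hqr)
  have hcq : c * q = 0 :=
    pow_eq_zero_iff two_ne_zero |>.1 (by linear_combination c * q * hsum - b * c * hqr)
  have hr : r = 0 := (mul_eq_zero.1 hbr).resolve_left (left_ne_zero_of_mul hbc.ne)
  have hq : q = 0 := (mul_eq_zero.1 hcq).resolve_left (right_ne_zero_of_mul hbc.ne)
  ext i j
  fin_cases i <;> fin_cases j
  · exact hp
  · exact hq
  · exact hr
  · simp [hK11, hp]

end Matrix

namespace Matrix.SpecialLinearGroup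

variable {R : Type*} [CommRing R]

theorem det_mul_sub_mul_eq_zero_of_trace_commutator_eq_two (g h : SpecialLinearGroup (Fin 2) R)
    (hcomm : (↑(g * h * g⁻¹ * h⁻¹) : Matrix (Fin 2) (Fin 2) R).trace = 2) :
    ((g * h : Matrix (Fin 2) (Fin 2) R) - h * g).det = 0 := by
  set C : Matrix (Fin 2) (Fin 2) R := ↑(g * h * g⁻¹ * h⁻¹)
  have hC : C * ((h : Matrix (Fin 2) (Fin 2) R) * g) = (g : Matrix (Fin 2) (Fin 2) R) * h := by
    simp [C, ← coe_mul, mul_assoc]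
  have hC_det : (C - 1).det = 0 := by
    rw [det_sub_one_fin_two, hcomm, (g * h * g⁻¹ * h⁻¹).2]
    ring
  rw [← hC, ← sub_one_mul, det_mul, hC_det, zero_mul]

end Matrix.SpecialLinearGroup

/-- If `g` is elliptic (`|Tr g| < 2`) and `Tr[g,h] = 2`, then `g` and `h` commute. -/
theorem stmt5 (g h : Matrix.SpecialLinearGroup (Fin 2) ℝ)
    (hell : |trSL g| < 2) (hcomm : trSL (g * h * g⁻¹ * h⁻¹) = 2) :
    g * h = h * g := by
  set G : Matrix (Fin 2) (Fin 2) ℝ := ↑g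
  set H : Matrix (Fin 2) (Fin 2) ℝ := ↑h
  have hG : G.trace ^ 2 < 4 * G.det := by
    obtain ⟨hlow, hupp⟩ := abs_lt.1 (show |G.trace| < 2 from hell)
    rw [g.2]
    nlinarith [sq_lt_sq' hlow hupp]
  have hK : G * H - H * G = 0 := by
    refine Matrix.eq_zero_of_trace_mul_eq_zero_fin_two hG ?_
      (Matrix.SpecialLinearGroup.det_mul_sub_mul_eq_zero_of_trace_commutator_eq_two g h hcomm) ?_
    · rw [Matrix.trace_sub, Matrix.trace_mul_comm, sub_self]
    · rw [Matrix.mul_sub, Matrix.trace_sub, sub_eq_zero, Matrix.trace_mul_comm G (H * G),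
        ← Matrix.mul_assoc, Matrix.trace_mul_cycle]
  exact Subtype.ext (by simpa [G, H, sub_eq_zero] using hK)
end

section
/- Let g, h ∈ SL(2,ℝ) with Tr(g·h·g⁻¹·h⁻¹) = 2 and g·h ≠ h·g. Then: (a) there exists a nonzero vector v ∈ ℝ² which is a common (real) eigenvector of g and h (i.e. g and h share a fixed point at infinity); (b) |Tr g| ≥ 2 and |Tr h| ≥ 2 (neither g nor h is elliptic); and (c) at least one of |Tr g|, |Tr h| is strictly greater than 2 (so either one of g,h is hyperbolic and the other parabolic, or both are hyperbolic). -/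
namespace Matrix

section CommRing

variable {R : Type*} [CommRing R] (A B : Matrix (Fin 2) (Fin 2) R)

theorem mul_self_sub_trace_smul_add_det_smul_one :
    A * A - A.trace • A + A.det • (1 : Matrix (Fin 2) (Fin 2) R) = 0 := by
  ext i j
  fin_cases i <;> fin_cases j <;>
    simp [mul_apply, trace_fin_two, det_fin_two, Fin.sum_univ_two] <;> ring

theorem commutator_mul_eq_adjugate_mul :
    (A * B - B * A) * A = adjugate A * (A * B - B * A) := by
  ext i j
  fin_cases i <;> fin_cases j <;>
    simp [mul_apply, adjugate_fin_two, Fin.sum_univ_two] <;> ring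

theorem det_commutator :
    (A * B - B * A).det = 2 * A.det * B.det - (A * B * adjugate A * adjugate B).trace := by
  simp [det_fin_two, trace_fin_two, mul_apply, adjugate_fin_two, Fin.sum_univ_two]
  ring

end CommRing

section Field

variable {K : Type*} [Field K]

theorem exists_eq_smul_of_mulVec_eq_zero {A : Matrix (Fin 2) (Fin 2) K} (hA : A ≠ 0)
    {v w : Fin 2 → K} (hv : v ≠ 0) (hAv : A *ᵥ v = 0) (hAw : A *ᵥ w = 0) :
    ∃ c : K, w = c • v := by
  set S := LinearMap.ker (toLin' A)
  have hS : S ≠ ⊤ := fun h =>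
    hA (toLin'.injective (LinearMap.ker_eq_top.mp h |>.trans (map_zero _).symm))
  have hv' : (⟨v, hAv⟩ : S) ≠ 0 := by simpa [← Subtype.val_inj] using hv
  have hS1 : Module.finrank K S = 1 := by
    have hlt := Submodule.finrank_lt hS
    have hpos : 0 < Module.finrank K S := Module.finrank_pos_iff_exists_ne_zero.mpr ⟨_, hv'⟩
    simp only [Module.finrank_fin_fun] at hlt
    omega
  obtain ⟨c, hc⟩ := (finrank_eq_one_iff_of_nonzero' _ hv').mp hS1 ⟨w, hAw⟩
  exact ⟨c, congrArg Subtype.val hc.symm⟩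

theorem mul_eq_zero_of_mul_self_eq_zero_of_mulVec {A B : Matrix (Fin 2) (Fin 2) K}
    {v : Fin 2 → K} (hB : B * B = 0) (hv : v ≠ 0) (hAv : A *ᵥ v = 0) (hBv : B *ᵥ v = 0) :
    A * B = 0 := by
  rcases eq_or_ne B 0 with rfl | hB0
  · exact mul_zero A
  refine ext_iff_mulVec.mpr fun w => ?_
  obtain ⟨c, hc⟩ := exists_eq_smul_of_mulVec_eq_zero hB0 hv hBv
    (w := B *ᵥ w) (by rw [mulVec_mulVec, hB, zero_mulVec])
  rw [← mulVec_mulVec, hc, mulVec_smul, hAv, smul_zero, zero_mulVec]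

theorem sq_sub_trace_mul_add_det_eq_zero {A : Matrix (Fin 2) (Fin 2) K} {v : Fin 2 → K}
    {μ : K} (hv : v ≠ 0) (hAv : A *ᵥ v = μ • v) : μ ^ 2 - A.trace * μ + A.det = 0 := by
  have h := congrArg (· *ᵥ v) (mul_self_sub_trace_smul_add_det_smul_one A)
  simp only [add_mulVec, sub_mulVec, ← mulVec_mulVec, smul_mulVec, one_mulVec, hAv,
    mulVec_smul, smul_smul, zero_mulVec, ← sub_smul, ← add_smul] at h
  simpa [sq, hv] using h

theorem exists_common_eigenvector {A B : Matrix (Fin 2) (Fin 2) K}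
    (hAB : A * B ≠ B * A) (hdet : (A * B - B * A).det = 0) :
    ∃ v ≠ 0, ∃ μ ν : K, A *ᵥ v = μ • v ∧ B *ᵥ v = ν • v := by
  obtain ⟨v, hv, hKv⟩ := exists_mulVec_eq_zero_iff.mpr hdet
  have hK : A * B - B * A ≠ 0 := sub_ne_zero.mpr hAB
  -- `ker [A, B]` is a line, and `A`, `B` preserve it since `[A, B] A = adj A [A, B]`.
  have hKA : (A * B - B * A) *ᵥ (A *ᵥ v) = 0 := by
    rw [mulVec_mulVec, commutator_mul_eq_adjugate_mul, ← mulVec_mulVec, hKv, mulVec_zero]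
  have hKB : (A * B - B * A) *ᵥ (B *ᵥ v) = 0 := by
    have h : (A * B - B * A) * B = adjugate B * (A * B - B * A) := by
      rw [← neg_sub, neg_mul, commutator_mul_eq_adjugate_mul, mul_neg]
    rw [mulVec_mulVec, h, ← mulVec_mulVec, hKv, mulVec_zero]
  obtain ⟨μ, hμ⟩ := exists_eq_smul_of_mulVec_eq_zero hK hv hKv hKA
  obtain ⟨ν, hν⟩ := exists_eq_smul_of_mulVec_eq_zero hK hv hKv hKB
  exact ⟨v, hv, μ, ν, hμ, hν⟩

variable [NeZero (2 : K)]

theorem sub_scalar_trace_div_two_mulVec_eq_zero {A : Matrix (Fin 2) (Fin 2) K}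
    {v : Fin 2 → K} {μ : K} (hA : A.discr = 0) (hv : v ≠ 0) (hAv : A *ᵥ v = μ • v) :
    (A - scalar (Fin 2) (A.trace / 2)) *ᵥ v = 0 := by
  have hμ : μ = A.trace / 2 := by
    have h := sq_sub_trace_mul_add_det_eq_zero hv hAv
    rw [discr_fin_two] at hA
    have : (2 * μ - A.trace) ^ 2 = 0 := by linear_combination 4 * h + hA
    field_simp
    linear_combination pow_eq_zero_iff two_ne_zero |>.mp this
  rw [sub_mulVec, hAv, scalar_apply, ← smul_one_eq_diagonal, smul_mulVec, one_mulVec, hμ,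
    sub_self]

theorem commute_of_discr_eq_zero {A B : Matrix (Fin 2) (Fin 2) K} {v : Fin 2 → K} {μ ν : K}
    (hA : A.discr = 0) (hB : B.discr = 0) (hv : v ≠ 0)
    (hAv : A *ᵥ v = μ • v) (hBv : B *ᵥ v = ν • v) : Commute A B := by
  set N := A - scalar (Fin 2) (A.trace / 2)
  set M := B - scalar (Fin 2) (B.trace / 2)
  have hN : N * N = 0 := by rw [← sq, sub_scalar_sq_eq_discr, hA, zero_div, map_zero]
  have hM : M * M = 0 := by rw [← sq, sub_scalar_sq_eq_discr, hB, zero_div, map_zero]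
  have hNv := sub_scalar_trace_div_two_mulVec_eq_zero hA hv hAv
  have hMv := sub_scalar_trace_div_two_mulVec_eq_zero hB hv hBv
  have hNM : Commute N M := by
    rw [Commute, SemiconjBy, mul_eq_zero_of_mul_self_eq_zero_of_mulVec hM hv hNv hMv,
      mul_eq_zero_of_mul_self_eq_zero_of_mulVec hN hv hMv hNv]
  have h := (hNM.add_left (scalar_commute (A.trace / 2) (Commute.all _) M)).add_right
    (scalar_commute (B.trace / 2) (Commute.all _) _).symm
  rwa [sub_add_cancel, sub_add_cancel] at h

end Field

end Matrix

theorem two_le_abs_of_sq_sub_mul_add_one_eq_zero {t μ : ℝ} (h : μ ^ 2 - t * μ + 1 = 0) :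
    2 ≤ |t| := by
  have h4 : 2 ^ 2 ≤ t ^ 2 := by nlinarith [sq_nonneg (2 * μ - t)]
  simpa using sq_le_sq.mp h4

/-- If `Tr[g,h] = 2` and `g`, `h` do not commute, then:
(a) `g` and `h` have a common real eigenvector (a common fixed point at infinity);
(b) neither `g` nor `h` is elliptic (`|Tr g| ≥ 2` and `|Tr h| ≥ 2`); and
(c) at least one of `|Tr g|`, `|Tr h|` is strictly greater than 2. -/
theorem stmt6 (g h : Matrix.SpecialLinearGroup (Fin 2) ℝ)
    (hcomm : trSL (g * h * g⁻¹ * h⁻¹) = 2) (hne : g * h ≠ h * g) :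
    (∃ v : Fin 2 → ℝ, v ≠ 0 ∧ ∃ μ ν : ℝ,
        (g : Matrix (Fin 2) (Fin 2) ℝ).mulVec v = μ • v ∧
        (h : Matrix (Fin 2) (Fin 2) ℝ).mulVec v = ν • v) ∧
    (2 ≤ |trSL g| ∧ 2 ≤ |trSL h|) ∧
    (2 < |trSL g| ∨ 2 < |trSL h|) := by
  have hGH : (g * h : Matrix (Fin 2) (Fin 2) ℝ) ≠ h * g := fun e => hne (Subtype.ext e)
  have hdet : ((g * h : Matrix (Fin 2) (Fin 2) ℝ) - h * g).det = 0 := by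
    simp only [trSL, Matrix.SpecialLinearGroup.coe_mul, Matrix.SpecialLinearGroup.coe_inv] at hcomm
    rw [Matrix.det_commutator, g.det_coe, h.det_coe, hcomm]
    norm_num
  obtain ⟨v, hv, μ, ν, hμ, hν⟩ := Matrix.exists_common_eigenvector hGH hdet
  have hg : 2 ≤ |trSL g| := two_le_abs_of_sq_sub_mul_add_one_eq_zero (by
    simpa [trSL, g.det_coe] using Matrix.sq_sub_trace_mul_add_det_eq_zero hv hμ)
  have hh : 2 ≤ |trSL h| := two_le_abs_of_sq_sub_mul_add_one_eq_zero (by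
    simpa [trSL, h.det_coe] using Matrix.sq_sub_trace_mul_add_det_eq_zero hv hν)
  refine ⟨⟨v, hv, μ, ν, hμ, hν⟩, ⟨hg, hh⟩, ?_⟩
  by_contra! hle
  have discr_eq_zero (k : Matrix.SpecialLinearGroup (Fin 2) ℝ) (hk : |trSL k| = 2) :
      (k : Matrix (Fin 2) (Fin 2) ℝ).discr = 0 := by
    rw [Matrix.discr_fin_two, k.det_coe, ← trSL, ← sq_abs, hk]
    norm_num
  exact hGH (Matrix.commute_of_discr_eq_zero (discr_eq_zero g (hle.1.antisymm hg))
    (discr_eq_zero h (hle.2.antisymm hh)) hv hμ hν)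
end

section
/- Let g, h ∈ SL(2,ℝ). If Tr(g·h·g⁻¹·h⁻¹) = 2 and the subgroup of SL(2,ℝ) generated by g and h is virtually abelian, then g·h = h·g. (A reducible virtually abelian representation is abelian.) -/
def IsVirtuallyAbelian (G : Type*) [Group G] : Prop :=
  ∃ H : Subgroup G, H.FiniteIndex ∧ ∀ a b : H, a * b = b * a

open Matrix
open scoped MatrixGroups

lemma IsVirtuallyAbelian.exists_pow_commute {G : Type*} [Group G] (hG : IsVirtuallyAbelian G) :
    ∃ d ≠ 0, ∀ u v : G, Commute (u ^ d) (v ^ d) := by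
  obtain ⟨H, hH, hab⟩ := hG
  refine ⟨H.normalCore.index, Subgroup.FiniteIndex.index_ne_zero, fun u v ↦ ?_⟩
  exact congrArg Subtype.val (hab ⟨_, H.normalCore_le (H.normalCore.pow_index_mem u)⟩
    ⟨_, H.normalCore_le (H.normalCore.pow_index_mem v)⟩)

lemma one_add_pow_of_sq_eq_zero {R : Type*} [Semiring R] {N : R} (hN : N ^ 2 = 0) (n : ℕ) :
    (1 + N) ^ n = 1 + n • N := by
  induction n with
  | zero => simp
  | succ n ih =>
    rw [pow_succ, ih, add_mul, one_mul, mul_add, mul_one, smul_mul_assoc, ← sq, hN, smul_zero,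
      add_zero, succ_nsmul', add_assoc, add_comm N]

namespace Matrix

lemma sub_one_sq_eq_zero_of_trace_eq_two {R : Type*} [CommRing R] {A : Matrix (Fin 2) (Fin 2) R}
    (htr : A.trace = 2) (hdet : A.det = 1) : (A - 1) ^ 2 = 0 := by
  nontriviality R
  have := aeval_self_charpoly A
  rw [charpoly_fin_two, htr, hdet] at this
  rw [← this, (Commute.one_right A).sub_sq]
  simp [map_ofNat]

variable {K : Type*} [Field K]

lemma exists_eq_smul_one_add_smul_of_commute {M X : Matrix (Fin 2) (Fin 2) K} (hM : M ^ 2 = 0)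
    (hM0 : M ≠ 0) (hX : Commute X M) : ∃ a b : K, X = a • 1 + b • M := by
  have htr : M 1 1 = -M 0 0 := by
    have := (isNilpotent_trace_of_isNilpotent ⟨2, hM⟩).eq_zero
    rw [trace_fin_two] at this
    linear_combination this
  have hsq := congrFun (congrFun hM 0) 0
  have hc := fun i j ↦ congrFun (congrFun hX.eq i) j
  simp only [sq, mul_apply, Fin.sum_univ_two, Matrix.zero_apply] at hsq hc
  rcases ne_or_eq (M 0 1) 0 with hq | hq
  · refine ⟨X 0 0 - X 0 1 / M 0 1 * M 0 0, X 0 1 / M 0 1, ?_⟩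
    ext i j
    fin_cases i <;> fin_cases j <;> simp [htr] <;> field_simp
    · linear_combination -hc 0 0
    · linear_combination -hc 0 1 + X 0 1 * htr
  · have hp : M 0 0 = 0 := by simpa [hq] using hsq
    have hr : M 1 0 ≠ 0 := fun hr ↦ hM0 (by ext i j; fin_cases i <;> fin_cases j <;> simp [*])
    refine ⟨X 0 0, X 1 0 / M 1 0, ?_⟩
    ext i j
    fin_cases i <;> fin_cases j <;> simp [htr, hp, hq, hr]
    · simpa [hp, hq, hr] using hc 0 0
    · refine mul_left_cancel₀ hr ?_
      simpa [htr, hp, hq, mul_comm] using hc 1 0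

lemma commute_of_commute_of_sq_eq_zero {M X Y : Matrix (Fin 2) (Fin 2) K} (hM : M ^ 2 = 0)
    (hM0 : M ≠ 0) (hX : Commute X M) (hY : Commute Y M) : Commute X Y := by
  obtain ⟨a, b, rfl⟩ := exists_eq_smul_one_add_smul_of_commute hM hM0 hX
  exact (((Commute.one_left Y).smul_left a).add_left (hY.symm.smul_left b))

variable [LinearOrder K] [IsStrictOrderedRing K]

lemma eq_zero_of_mul_eq_neg_mul
    {A M : Matrix (Fin 2) (Fin 2) K} (hA : 0 < A.det) (hM : M ^ 2 = 0) (hAM : A * M = -(M * A)) :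
    M = 0 := by
  have htr : M 0 0 + M 1 1 = 0 := by
    simpa [trace_fin_two] using (isNilpotent_trace_of_isNilpotent ⟨2, hM⟩).eq_zero
  have hsq := congrFun (congrFun hM 0) 0
  have hc := fun i j ↦ congrFun (congrFun hAM i) j
  simp only [sq, mul_apply, Fin.sum_univ_two, Matrix.zero_apply, Matrix.neg_apply] at hsq hc
  rw [det_fin_two] at hA
  obtain ⟨hp, hq, hr⟩ : M 0 0 = 0 ∧ M 0 1 = 0 ∧ M 1 0 = 0 := by
    rcases eq_or_ne (A 0 0 + A 1 1) 0 with hA0 | hA0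
    · -- On traceless matrices `det` is a form of signature `(1, 2)`; here `A` is positive for it
      -- and `M` is a null vector orthogonal to `A`, which the following sum of squares rules out.
      have key : (A 0 0 * A 1 1 - A 0 1 * A 1 0) * (M 0 1 - M 1 0) ^ 2
          + (A 0 0 * (M 0 1 + M 1 0) - (A 0 1 + A 1 0) * M 0 0) ^ 2 = 0 := by
        linear_combination (4 * A 0 0 ^ 2 + (A 0 1 + A 1 0) ^ 2) * hsq
          - (A 0 1 * M 0 1 + A 1 0 * M 1 0 + 2 * A 0 0 * M 0 0) * hc 0 0
          + A 0 0 * (M 0 1 - M 1 0) ^ 2 * hA0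
      have hqr : M 0 1 = M 1 0 := by
        have := ((add_eq_zero_iff_of_nonneg (by positivity) (sq_nonneg _)).1 key).1
        simpa [hA.ne', sub_eq_zero] using this
      rw [← hqr] at hsq ⊢
      simpa using mul_self_add_mul_self_eq_zero.1 hsq
    · have hq : M 0 1 = 0 := mul_left_cancel₀ hA0 (by linear_combination hc 0 1 - A 0 1 * htr)
      have hr : M 1 0 = 0 := mul_left_cancel₀ hA0 (by linear_combination hc 1 0 - A 1 0 * htr)
      simpa [hq, hr] using hsq
  ext i j
  fin_cases i <;> fin_cases j <;> simp [hp, hq, hr]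
  linarith

lemma commute_of_commute_pow_of_commute_conj {M U V : Matrix (Fin 2) (Fin 2) K}
    (hM : M ^ 2 = 0) (hM0 : M ≠ 0) (hU : 0 < U.det) (hVU : V * U = 1) {d : ℕ} (hd : d ≠ 0)
    (hpow : Commute (U ^ d) M) (hconj : Commute (U * M * V) M) : Commute U M := by
  obtain ⟨a, s, hs⟩ := exists_eq_smul_one_add_smul_of_commute hM hM0 hconj
  obtain rfl : a = 0 := by
    have := congrArg trace hs
    rw [trace_mul_cycle, hVU, one_mul, trace_add, trace_smul, trace_smul, trace_one,
      (isNilpotent_trace_of_isNilpotent ⟨2, hM⟩).eq_zero] at this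
    simpa using this
  rw [zero_smul, zero_add] at hs
  have hsemi : SemiconjBy U M (s • M) := by
    rw [SemiconjBy, ← hs, mul_assoc _ V, hVU, mul_one]
  have hsemi_pow (k : ℕ) : SemiconjBy (U ^ k) M (s ^ k • M) := by
    induction k with
    | zero => simp
    | succ k ih => simpa [pow_succ, smul_smul, mul_comm] using (ih.smul_right s).mul_left hsemi
  have hsd : s ^ d = 1 := by
    have hUd : IsUnit (U ^ d) := ((isUnit_iff_isUnit_det U).2 (isUnit_iff_ne_zero.2 hU.ne')).pow d
    have hMU : M * U ^ d ≠ 0 := by rwa [Ne, hUd.mul_left_eq_zero]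
    refine smul_left_injective K hMU ?_
    simpa [smul_mul_assoc] using (hsemi_pow d).eq.symm.trans hpow.eq
  rcases pow_eq_one_iff_cases.1 hsd with hd0 | rfl | ⟨rfl, -⟩
  · exact absurd hd0 hd
  · rwa [one_smul] at hsemi
  · refine absurd (eq_zero_of_mul_eq_neg_mul hU hM ?_) hM0
    simpa using hsemi.eq

end Matrix

namespace Matrix.SpecialLinearGroup

variable {K : Type*} [Field K]

local notation:1024 "↑ₘ" A:1024 => ((A : SL(2, K)) : Matrix (Fin 2) (Fin 2) K)

lemma coe_pow_sub_one_of_sq_eq_zero {c : SL(2, K)} (hc : (↑ₘc - 1) ^ 2 = 0) (n : ℕ) :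
    ↑ₘ(c ^ n) - 1 = n • (↑ₘc - 1) := by
  conv_lhs => rw [coe_pow, ← add_sub_cancel 1 ↑ₘc, one_add_pow_of_sq_eq_zero hc,
    add_sub_cancel_left]

lemma coe_sub_one_eq_zero_iff {e : SL(2, K)} : ↑ₘe - 1 = 0 ↔ e = 1 := by
  rw [sub_eq_zero, ← coe_one]
  exact Subtype.ext_iff.symm

lemma sq_coe_pow_sub_one_eq_zero {c : SL(2, K)} (hc : (↑ₘc - 1) ^ 2 = 0) (n : ℕ) :
    (↑ₘ(c ^ n) - 1) ^ 2 = 0 := by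
  rw [coe_pow_sub_one_of_sq_eq_zero hc, smul_pow, hc, smul_zero]

lemma pow_ne_one_of_sq_coe_sub_one_eq_zero [CharZero K] {c : SL(2, K)} (hc : (↑ₘc - 1) ^ 2 = 0)
    (hc1 : c ≠ 1) {n : ℕ} (hn : n ≠ 0) : c ^ n ≠ 1 := by
  rw [Ne, ← coe_sub_one_eq_zero_iff, coe_pow_sub_one_of_sq_eq_zero hc,
    ← Nat.cast_smul_eq_nsmul K, smul_eq_zero, Nat.cast_eq_zero, not_or, coe_sub_one_eq_zero_iff]
  exact ⟨hn, hc1⟩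

lemma commute_iff_commute_coe_sub_one {u e : SL(2, K)} :
    Commute u e ↔ Commute ↑ₘu (↑ₘe - 1) := by
  refine ⟨fun h ↦ ?_, fun h ↦ Subtype.ext ?_⟩
  · simpa using (h.map coeMonoidHom).sub_right (Commute.one_right _)
  · simpa using (h.add_right (Commute.one_right _)).eq

lemma commute_of_commute_pow_of_commute_conj [LinearOrder K] [IsStrictOrderedRing K]
    {e u : SL(2, K)} (he : (↑ₘe - 1) ^ 2 = 0) (he1 : e ≠ 1) {d : ℕ} (hd : d ≠ 0)
    (hpow : Commute (u ^ d) e) (hconj : Commute (u * e * u⁻¹) e) : Commute u e := by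
  have hUV : ↑ₘu * ↑ₘu⁻¹ = 1 := by rw [← coe_mul, mul_inv_cancel, coe_one]
  have hVU : ↑ₘu⁻¹ * ↑ₘu = 1 := by rw [← coe_mul, inv_mul_cancel, coe_one]
  rw [commute_iff_commute_coe_sub_one] at hpow hconj ⊢
  have hconj' : Commute (↑ₘu * (↑ₘe - 1) * ↑ₘu⁻¹) (↑ₘe - 1) := by
    rw [mul_sub, mul_one, sub_mul, hUV]
    simpa using hconj.sub_left (Commute.one_left _)
  refine Matrix.commute_of_commute_pow_of_commute_conj he ?_ (by simp) hVU hd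
    (by simpa using hpow) hconj'
  exact coe_sub_one_eq_zero_iff.not.2 he1

lemma commute_of_commute_of_sq_coe_sub_one_eq_zero {e u v : SL(2, K)}
    (he : (↑ₘe - 1) ^ 2 = 0) (he1 : e ≠ 1) (hu : Commute u e) (hv : Commute v e) :
    Commute u v := by
  rw [commute_iff_commute_coe_sub_one] at hu hv
  exact Subtype.ext
    (commute_of_commute_of_sq_eq_zero he (coe_sub_one_eq_zero_iff.not.2 he1) hu hv).eq

end Matrix.SpecialLinearGroup

/-- If `Tr[g,h] = 2` (i.e. the pair `(g,h)` is reducible) and the subgroup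
generated by `g` and `h` is virtually abelian, then `g` and `h` commute. -/
theorem stmt8 (g h : Matrix.SpecialLinearGroup (Fin 2) ℝ)
    (hcomm : trSL (g * h * g⁻¹ * h⁻¹) = 2)
    (hva : IsVirtuallyAbelian
      (Subgroup.closure ({g, h} : Set (Matrix.SpecialLinearGroup (Fin 2) ℝ)))) :
    g * h = h * g := by
  set G := Subgroup.closure ({g, h} : Set (Matrix.SpecialLinearGroup (Fin 2) ℝ))
  have hgG : g ∈ G := Subgroup.subset_closure (by simp)
  have hhG : h ∈ G := Subgroup.subset_closure (by simp)
  set c := g * h * g⁻¹ * h⁻¹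
  have hcG : c ∈ G := mul_mem (mul_mem (mul_mem hgG hhG) (inv_mem hgG)) (inv_mem hhG)
  have hc : ((c : Matrix (Fin 2) (Fin 2) ℝ) - 1) ^ 2 = 0 :=
    sub_one_sq_eq_zero_of_trace_eq_two hcomm c.2
  rcases eq_or_ne c 1 with hc1 | hc1
  · exact commutatorElement_eq_one_iff_mul_comm.1 hc1
  obtain ⟨d, hd, hG⟩ := hva.exists_pow_commute
  have hpow : ∀ u ∈ G, ∀ v ∈ G, Commute (u ^ d) (v ^ d) := fun u hu v hv ↦ by
    simpa using (hG ⟨u, hu⟩ ⟨v, hv⟩).map G.subtype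
  have he := SpecialLinearGroup.sq_coe_pow_sub_one_eq_zero hc d
  have he1 := SpecialLinearGroup.pow_ne_one_of_sq_coe_sub_one_eq_zero hc hc1 hd
  have hcentral (u : SL(2, ℝ)) (hu : u ∈ G) : Commute u (c ^ d) :=
    SpecialLinearGroup.commute_of_commute_pow_of_commute_conj he he1 hd (hpow u hu c hcG)
      (by simpa [conj_pow] using hpow _ (mul_mem (mul_mem hu hcG) (inv_mem hu)) c hcG)
  exact SpecialLinearGroup.commute_of_commute_of_sq_coe_sub_one_eq_zero he he1
    (hcentral g hgG) (hcentral h hhG)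
end

section
/- Let (x,y,z) ∈ ℝ³ satisfy x² + y² + z² − xyz > 4, and suppose (x,y,z) ∉ V, i.e. it is not the case that two of the coordinates are 0 and the third has absolute value greater than 2. Then under the equivalence relation on ℝ³ generated by permutations of the coordinates and the moves (x,y,z) ∼ (x,y,xy−z) and (x,y,z) ∼ (−x,−y,z), the triple (x,y,z) is equivalent to some (x',y',z') with x' > 2, y' > 2 and z' > 2. -/
/-- The basic moves on triples of reals: transpositions of coordinates (which
generate all permutations of the coordinates), the Markoff move
`(x,y,z) ↦ (x,y,xy−z)`, and the sign change `(x,y,z) ↦ (−x,−y,z)`. -/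
def markoffSignMove : ℝ × ℝ × ℝ → ℝ × ℝ × ℝ → Prop := fun p q =>
  q = (p.2.1, p.1, p.2.2) ∨
  q = (p.1, p.2.2, p.2.1) ∨
  q = (p.1, p.2.1, p.1 * p.2.1 - p.2.2) ∨
  q = (-p.1, -p.2.1, p.2.2)

/-!
The form `κ = x² + y² + z² − xyz` is invariant under all moves. Inside the box
`[−2, 2]³` with `κ > 4`, the Vieta move `z ↦ xy − z` on a coordinate of least absolute
value raises the sum of squares by at least `κ − 4`; since the sum of squares is at most
`12` on the box, finitely many moves lead out of it, to a triple with a coordinate `t`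
with `|t| > 2`, and a sign change makes `t > 2`. Keeping `t` fixed, the rotation
`(a, b) ↦ (b, bt − a)` then pushes the two other coordinates past `2`, unless both vanish.
Having two vanishing coordinates is invariant under the moves, and when `κ > 4` it means
exactly lying in `V`.
-/

theorem Relation.exists_reflTransGen_of_increase {α : Type*} {r : α → α → Prop}
    {I P : α → Prop} (f : α → ℝ) {M δ : ℝ} (hδ : 0 < δ)
    (hbdd : ∀ p, I p → ¬P p → f p ≤ M)
    (hstep : ∀ p, I p → ¬P p → ∃ q, r p q ∧ I q ∧ f p + δ ≤ f q)
    {p : α} (hp : I p) : ∃ q, Relation.ReflTransGen r p q ∧ P q := by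
  suffices key : ∀ n : ℕ, ∀ p, I p → M < f p + n * δ →
      ∃ q, Relation.ReflTransGen r p q ∧ P q by
    obtain ⟨n, hn⟩ := exists_nat_gt ((M - f p) / δ)
    exact key n p hp (by rw [div_lt_iff₀ hδ] at hn; linarith)
  intro n
  induction n with
  | zero =>
    intro p hp hM
    by_contra hne
    have hP : ¬P p := fun hP => hne ⟨p, .refl, hP⟩
    linarith [hbdd p hp hP, show M < f p by simpa using hM]
  | succ n ih =>
    intro p hp hM
    by_cases hP : P p
    · exact ⟨p, .refl, hP⟩
    obtain ⟨q, hpq, hq, hfq⟩ := hstep p hp hP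
    obtain ⟨s, hqs, hs⟩ := ih q hq (by push_cast at hM; linarith)
    exact ⟨s, .head hpq hqs, hs⟩

namespace Markoff

local infix:50 " ∼ " => Relation.EqvGen markoffSignMove

def markoffForm (p : ℝ × ℝ × ℝ) : ℝ :=
  p.1 ^ 2 + p.2.1 ^ 2 + p.2.2 ^ 2 - p.1 * p.2.1 * p.2.2

def sqSum (p : ℝ × ℝ × ℝ) : ℝ := p.1 ^ 2 + p.2.1 ^ 2 + p.2.2 ^ 2

def TwoZero (p : ℝ × ℝ × ℝ) : Prop :=
  (p.1 = 0 ∧ p.2.1 = 0) ∨ (p.1 = 0 ∧ p.2.2 = 0) ∨ (p.2.1 = 0 ∧ p.2.2 = 0)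

def AllGtTwo (p : ℝ × ℝ × ℝ) : Prop := 2 < p.1 ∧ 2 < p.2.1 ∧ 2 < p.2.2

section Moves

variable (x y z : ℝ)

theorem swap₁₂ : (x, y, z) ∼ (y, x, z) := .rel _ _ (.inl rfl)

theorem swap₂₃ : (x, y, z) ∼ (x, z, y) := .rel _ _ (.inr (.inl rfl))

theorem vieta₃ : (x, y, z) ∼ (x, y, x * y - z) := .rel _ _ (.inr (.inr (.inl rfl)))

theorem neg₁₂ : (x, y, z) ∼ (-x, -y, z) := .rel _ _ (.inr (.inr (.inr rfl)))

theorem swap₁₃ : (x, y, z) ∼ (z, y, x) :=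
  ((swap₂₃ x y z).trans _ _ _ (swap₁₂ x z y)).trans _ _ _ (swap₂₃ z x y)

theorem neg₂₃ : (x, y, z) ∼ (x, -y, -z) :=
  ((swap₁₃ x y z).trans _ _ _ (neg₁₂ z y x)).trans _ _ _ (swap₁₃ (-z) (-y) x)

theorem rotate : (x, y, z) ∼ (y, y * z - x, z) :=
  (((swap₁₂ x y z).trans _ _ _ (swap₂₃ y x z)).trans _ _ _ (vieta₃ y z x)).trans _ _ _
    (swap₂₃ y z (y * z - x))

end Moves

theorem twoZero_iff_of_move {p q : ℝ × ℝ × ℝ} (h : markoffSignMove p q) :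
    TwoZero p ↔ TwoZero q := by
  obtain ⟨x, y, z⟩ := p
  rcases h with rfl | rfl | rfl | rfl <;> simp only [TwoZero] <;>
    constructor <;> rintro (⟨h1, h2⟩ | ⟨h1, h2⟩ | ⟨h1, h2⟩) <;> simp_all

theorem twoZero_iff_of_eqvGen {p q : ℝ × ℝ × ℝ} (h : p ∼ q) : TwoZero p ↔ TwoZero q :=
  (congrArg (Quot.lift TwoZero fun _ _ h => propext (twoZero_iff_of_move h))
    (Quot.eqvGen_sound h)).to_iff

theorem markoffForm_le_four_of_mul_le {X Y Z : ℝ} (hZ : 0 ≤ Z) (hZX : Z ≤ X) (hZY : Z ≤ Y)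
    (hX : X ≤ 2) (hY : Y ≤ 2) (h : X * Y ≤ 2 * Z) : markoffForm (X, Y, Z) ≤ 4 := by
  wlog hYX : Y ≤ X generalizing X Y
  · have := this hZY hZX hY hX (by linarith) (le_of_not_ge hYX)
    simp only [markoffForm] at this ⊢
    linarith
  -- `4 - markoffForm (X, Y, Z) = (2 - X) * (X + 2 - Y ^ 2) + (Y - Z) * (Y + Z - X * Y)`
  simp only [markoffForm]
  nlinarith [mul_nonneg (sub_nonneg.2 hX) (by nlinarith : 0 ≤ X + 2 - Y ^ 2),
    mul_nonneg (sub_nonneg.2 hZY) (by nlinarith : 0 ≤ Y + Z - X * Y)]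

theorem sq_add_sq_add_sq_add_mul_sub_le_four {X Y Z : ℝ} (hX₀ : 0 ≤ X) (hY₀ : 0 ≤ Y)
    (hZ : 0 ≤ Z) (hX : X ≤ 2) (hY : Y ≤ 2) (h : 2 * Z ≤ X * Y) :
    X ^ 2 + Y ^ 2 + Z ^ 2 + X * Y * Z - X ^ 2 * Y ^ 2 ≤ 4 := by
  -- `4 - lhs = (4 - X ^ 2) * (4 - Y ^ 2) / 4 + (X * Y / 2 - Z) * (3 * X * Y / 2 + Z)`
  nlinarith [mul_nonneg (by nlinarith : 0 ≤ 4 - X ^ 2) (by nlinarith : 0 ≤ 4 - Y ^ 2),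
    mul_nonneg (by linarith : 0 ≤ X * Y / 2 - Z) (by positivity : 0 ≤ 3 * X * Y / 2 + Z)]

theorem markoffForm_sub_four_le {x y z : ℝ} (hzx : |z| ≤ |x|) (hzy : |z| ≤ |y|)
    (hx : |x| ≤ 2) (hy : |y| ≤ 2) (hκ : 4 < markoffForm (x, y, z)) :
    markoffForm (x, y, z) - 4 ≤ (x * y - z) ^ 2 - z ^ 2 := by
  have hXYZ : 0 ≤ |x| * |y| * |z| := by positivity
  have hXY : 0 ≤ |x| ^ 2 * |y| ^ 2 := by positivity
  have hsign : x * y * z = |x| * |y| * |z| ∨ x * y * z = -(|x| * |y| * |z|) := by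
    rw [← abs_mul, ← abs_mul]
    rcases abs_choice (x * y * z) with h | h <;> simp [h]
  have hκ' : markoffForm (x, y, z) = |x| ^ 2 + |y| ^ 2 + |z| ^ 2 - x * y * z := by
    simp only [markoffForm, sq_abs]
  have hΔ : (x * y - z) ^ 2 - z ^ 2 = |x| ^ 2 * |y| ^ 2 - 2 * (x * y * z) := by
    simp only [sq_abs]; ring
  rw [hκ'] at hκ ⊢
  rw [hΔ]
  rcases le_total (|x| * |y|) (2 * |z|) with h | h
  · have := markoffForm_le_four_of_mul_le (abs_nonneg z) hzx hzy hx hy h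
    simp only [markoffForm] at this
    rcases hsign with hs | hs <;> rw [hs] at hκ ⊢ <;> linarith
  · have := sq_add_sq_add_sq_add_mul_sub_le_four (abs_nonneg x) (abs_nonneg y) (abs_nonneg z)
      hx hy h
    rcases hsign with hs | hs <;> rw [hs] at hκ ⊢ <;> linarith

theorem exists_eqvGen_sqSum_add_le {x y z : ℝ} (hx : |x| ≤ 2) (hy : |y| ≤ 2) (hz : |z| ≤ 2)
    (hκ : 4 < markoffForm (x, y, z)) :
    ∃ q, (x, y, z) ∼ q ∧ markoffForm q = markoffForm (x, y, z) ∧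
      sqSum (x, y, z) + (markoffForm (x, y, z) - 4) ≤ sqSum q := by
  wlog hmin : |z| ≤ |x| ∧ |z| ≤ |y| generalizing x y z
  · rw [not_and_or, not_le, not_le] at hmin
    rcases le_total |x| |y| with hxy | hyx
    · obtain ⟨q, hq, hκq, hsq⟩ := this hz hy hx
        (by simp only [markoffForm] at hκ ⊢; linarith)
        ⟨by rcases hmin with h | h <;> linarith, hxy⟩
      refine ⟨q, (swap₁₃ x y z).trans _ _ _ hq, ?_, ?_⟩ <;>
        simp only [markoffForm, sqSum] at hκq hsq ⊢ <;> linarith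
    · obtain ⟨q, hq, hκq, hsq⟩ := this hx hz hy
        (by simp only [markoffForm] at hκ ⊢; linarith)
        ⟨hyx, by rcases hmin with h | h <;> linarith⟩
      refine ⟨q, (swap₂₃ x y z).trans _ _ _ hq, ?_, ?_⟩ <;>
        simp only [markoffForm, sqSum] at hκq hsq ⊢ <;> linarith
  refine ⟨(x, y, x * y - z), vieta₃ x y z, by simp only [markoffForm]; ring, ?_⟩
  have := markoffForm_sub_four_le hmin.1 hmin.2 hx hy hκ
  simp only [sqSum]
  linarith

theorem exists_eqvGen_two_lt_abs {p : ℝ × ℝ × ℝ} (hκ : 4 < markoffForm p) :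
    ∃ q, p ∼ q ∧ (2 < |q.1| ∨ 2 < |q.2.1| ∨ 2 < |q.2.2|) := by
  obtain ⟨q, hpq, hq⟩ := Relation.exists_reflTransGen_of_increase (r := (· ∼ ·))
    (I := fun q => markoffForm q = markoffForm p)
    (P := fun q => 2 < |q.1| ∨ 2 < |q.2.1| ∨ 2 < |q.2.2|) sqSum (M := 12) (sub_pos.2 hκ)
    (fun ⟨x, y, z⟩ _ hbig => by
      have sq_le_four {w : ℝ} (hw : |w| ≤ 2) : w ^ 2 ≤ 4 := by
        nlinarith [abs_le.1 hw]
      simp only [not_or, not_lt] at hbig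
      obtain ⟨hx, hy, hz⟩ := hbig
      simp only [sqSum]
      linarith [sq_le_four hx, sq_le_four hy, sq_le_four hz])
    (fun ⟨x, y, z⟩ hI hbig => by
      simp only [not_or, not_lt] at hbig
      obtain ⟨hx, hy, hz⟩ := hbig
      obtain ⟨q, hq, hκq, hsq⟩ := exists_eqvGen_sqSum_add_le hx hy hz (hI ▸ hκ)
      exact ⟨q, hq, hκq.trans hI, hI ▸ hsq⟩)
    rfl
  rw [Relation.reflTransGen_eq_self] at hpq
  exact ⟨q, hpq, hq⟩

/-- The rotation `(a, b, t) ↦ (b, b * t - a, t)` never shrinks the gap `b - a` when `t > 2`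
and `b ≥ 0`, so the first coordinate grows at least linearly. -/
theorem exists_eqvGen_allGtTwo_of_lt {a b t : ℝ} (ht : 2 < t) (hb : 0 ≤ b) (hab : a < b) :
    ∃ q, (a, b, t) ∼ q ∧ AllGtTwo q := by
  obtain ⟨q, hpq, hq⟩ := Relation.exists_reflTransGen_of_increase (r := (· ∼ ·))
    (I := fun q => q.2.2 = t ∧ 0 ≤ q.2.1 ∧ b - a ≤ q.2.1 - q.1) (P := AllGtTwo)
    (fun q => q.1) (M := 2) (sub_pos.2 hab)
    (fun ⟨a', b', t'⟩ ⟨ht', _, hgap⟩ hP => by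
      by_contra! ha'
      exact hP ⟨ha', by linarith, ht'.symm ▸ ht⟩)
    (fun ⟨a', b', t'⟩ ⟨ht', hb', hgap⟩ _ => by
      subst ht'
      exact ⟨(b', b' * t' - a', t'), rotate a' b' t', ⟨rfl, by nlinarith, by nlinarith⟩,
        by linarith⟩)
    (p := (a, b, t)) ⟨rfl, hb, le_rfl⟩
  rw [Relation.reflTransGen_eq_self] at hpq
  exact ⟨q, hpq, hq⟩

theorem exists_eqvGen_allGtTwo_of_le {a b t : ℝ} (ht : 2 < t) (hb : 0 < b) (hab : a ≤ b) :
    ∃ q, (a, b, t) ∼ q ∧ AllGtTwo q := by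
  obtain ⟨q, hq, hq'⟩ :=
    exists_eqvGen_allGtTwo_of_lt (a := b) (b := b * t - a) ht (by nlinarith) (by nlinarith)
  exact ⟨q, (rotate a b t).trans _ _ _ hq, hq'⟩

theorem exists_eqvGen_allGtTwo_of_two_lt {a b t : ℝ} (ht : 2 < t) (hab : ¬(a = 0 ∧ b = 0)) :
    ∃ q, (a, b, t) ∼ q ∧ AllGtTwo q := by
  wlog hba : a ≤ b generalizing a b
  · obtain ⟨q, hq, hq'⟩ := this (fun h => hab h.symm) (le_of_not_ge hba)
    exact ⟨q, (swap₁₂ a b t).trans _ _ _ hq, hq'⟩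
  rcases lt_or_ge 0 b with hb | hb
  · exact exists_eqvGen_allGtTwo_of_le ht hb hba
  · have ha : a < 0 := lt_of_le_of_ne (hba.trans hb) fun ha => hab ⟨ha, by linarith⟩
    obtain ⟨q, hq, hq'⟩ :=
      exists_eqvGen_allGtTwo_of_le (a := -b) (b := -a) ht (by linarith) (by linarith)
    exact ⟨q, ((neg₁₂ a b t).trans _ _ _ (swap₁₂ _ _ t)).trans _ _ _ hq, hq'⟩

theorem exists_eqvGen_allGtTwo_of_two_lt_abs {a b t : ℝ} (ht : 2 < |t|)
    (hab : ¬(a = 0 ∧ b = 0)) : ∃ q, (a, b, t) ∼ q ∧ AllGtTwo q := by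
  rcases lt_abs.1 ht with ht | ht
  · exact exists_eqvGen_allGtTwo_of_two_lt ht hab
  · obtain ⟨q, hq, hq'⟩ := exists_eqvGen_allGtTwo_of_two_lt (a := a) (b := -b) (t := -t) ht
      (by rwa [neg_eq_zero])
    exact ⟨q, (neg₂₃ a b t).trans _ _ _ hq, hq'⟩

theorem exists_eqvGen_allGtTwo {p : ℝ × ℝ × ℝ} (hp : ¬TwoZero p)
    (hbig : 2 < |p.1| ∨ 2 < |p.2.1| ∨ 2 < |p.2.2|) : ∃ q, p ∼ q ∧ AllGtTwo q := by
  obtain ⟨x, y, z⟩ := p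
  simp only [TwoZero, not_or] at hp
  obtain ⟨hxy, hxz, hyz⟩ := hp
  rcases hbig with h | h | h
  · obtain ⟨q, hq, hq'⟩ := exists_eqvGen_allGtTwo_of_two_lt_abs (a := z) (b := y) h
      fun h => hyz h.symm
    exact ⟨q, (swap₁₃ x y z).trans _ _ _ hq, hq'⟩
  · obtain ⟨q, hq, hq'⟩ := exists_eqvGen_allGtTwo_of_two_lt_abs (a := x) (b := z) h hxz
    exact ⟨q, (swap₂₃ x y z).trans _ _ _ hq, hq'⟩
  · exact exists_eqvGen_allGtTwo_of_two_lt_abs h hxy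

theorem markoff_mem_V_of_twoZero {x y z : ℝ} (hκ : 4 < markoffForm (x, y, z))
    (h : TwoZero (x, y, z)) :
    (x = 0 ∧ y = 0 ∧ 2 < |z|) ∨ (x = 0 ∧ z = 0 ∧ 2 < |y|) ∨
      (y = 0 ∧ z = 0 ∧ 2 < |x|) := by
  have two_lt_abs {w : ℝ} (hw : 4 < w ^ 2) : 2 < |w| := by
    simpa using sq_lt_sq.1 (by linarith : (2 : ℝ) ^ 2 < w ^ 2)
  simp only [markoffForm] at hκ
  rcases h with ⟨rfl, rfl⟩ | ⟨rfl, rfl⟩ | ⟨rfl, rfl⟩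
  · exact .inl ⟨rfl, rfl, two_lt_abs (by linarith)⟩
  · exact .inr (.inl ⟨rfl, rfl, two_lt_abs (by linarith)⟩)
  · exact .inr (.inr ⟨rfl, rfl, two_lt_abs (by linarith)⟩)

end Markoff

open Markoff in
/-- If `x² + y² + z² − xyz > 4` and `(x,y,z)` is not in `V` (two coordinates zero
and the third of absolute value `> 2`), then under the equivalence relation
generated by permutations of coordinates, the Markoff move
`(x,y,z) ∼ (x,y,xy−z)` and the sign change `(x,y,z) ∼ (−x,−y,z)`, the triple
`(x,y,z)` is equivalent to some triple all of whose entries exceed `2`. -/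
theorem stmt9 (x y z : ℝ) (hk : 4 < x ^ 2 + y ^ 2 + z ^ 2 - x * y * z)
    (hV : ¬ ((x = 0 ∧ y = 0 ∧ 2 < |z|) ∨ (x = 0 ∧ z = 0 ∧ 2 < |y|) ∨
             (y = 0 ∧ z = 0 ∧ 2 < |x|))) :
    ∃ x' y' z' : ℝ, Relation.EqvGen markoffSignMove (x, y, z) (x', y', z') ∧
      2 < x' ∧ 2 < y' ∧ 2 < z' := by
  have hκ : 4 < markoffForm (x, y, z) := hk
  obtain ⟨q, hpq, hq⟩ := exists_eqvGen_two_lt_abs hκ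
  have hq₀ : ¬TwoZero q := fun h =>
    hV (markoff_mem_V_of_twoZero hκ ((twoZero_iff_of_eqvGen hpq).2 h))
  obtain ⟨s, hqs, hs⟩ := exists_eqvGen_allGtTwo hq₀ hq
  exact ⟨s.1, s.2.1, s.2.2, hpq.trans _ _ _ hqs, hs⟩
end

section
/- (Nielsen) Let F₂ be the free group on two generators a, b, and let φ be an automorphism of F₂. Then φ([a,b]) is conjugate in F₂ either to [a,b] or to its inverse [b,a]; that is, there exists w ∈ F₂ with φ(a·b·a⁻¹·b⁻¹) = w·(a·b·a⁻¹·b⁻¹)·w⁻¹ or φ(a·b·a⁻¹·b⁻¹) = w·(b·a·b⁻¹·a⁻¹)·w⁻¹. -/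
/-!
The automorphisms of `F₂` sending `[a, b]` to a conjugate of `[a, b]` or of `[a, b]⁻¹` form a
subgroup, which contains the inner automorphisms and the elementary Nielsen transvections. We show
that it contains every `φ`, by induction on `|φ a| + |φ b|`. If composing `φ` with an element of
the subgroup shortens this, the induction hypothesis applies. Otherwise no transvection followed by
a conjugation shortens the pair `(φ a, φ b)`, which forces it to be Nielsen reduced: in the image
of a reduced word the middle of every factor survives, so `|w| ≤ |φ w|` for all `w`. Applied to
`φ⁻¹ a` and `φ⁻¹ b` this shows that `φ⁻¹` permutes the generators up to inversion, and such an
automorphism visibly lies in the subgroup.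
-/

open List
open scoped commutatorElement

section IsConjUpToInv

variable {G H : Type*} [Group G] [Group H]

theorem IsConj.inv {x y : G} (h : IsConj x y) : IsConj x⁻¹ y⁻¹ := by
  obtain ⟨c, rfl⟩ := isConj_iff.1 h
  exact isConj_iff.2 ⟨c, by group⟩

def IsConjUpToInv (x y : G) : Prop := IsConj x y ∨ IsConj x⁻¹ y

theorem IsConjUpToInv.refl (x : G) : IsConjUpToInv x x := Or.inl (IsConj.refl x)

theorem IsConj.isConjUpToInv {x y : G} (h : IsConj x y) : IsConjUpToInv x y := Or.inl h

theorem isConjUpToInv_inv_right {x y : G} : IsConjUpToInv x y⁻¹ ↔ IsConjUpToInv x y := by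
  unfold IsConjUpToInv
  constructor <;> rintro (h | h)
  · exact Or.inr (by simpa using h.inv)
  · exact Or.inl (by simpa using h.inv)
  · exact Or.inr h.inv
  · exact Or.inl (by simpa using h.inv)

theorem IsConjUpToInv.symm {x y : G} (h : IsConjUpToInv x y) : IsConjUpToInv y x := by
  rcases h with h | h
  · exact Or.inl h.symm
  · exact Or.inr (by simpa using h.symm.inv)

theorem IsConjUpToInv.trans {x y z : G} (h : IsConjUpToInv x y) (h' : IsConjUpToInv y z) :
    IsConjUpToInv x z := by
  rcases h with h | h <;> rcases h' with h' | h'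
  · exact Or.inl (h.trans h')
  · exact Or.inr (h.inv.trans h')
  · exact Or.inr (h.trans h')
  · exact Or.inl (by simpa using h.inv.trans h')

theorem IsConjUpToInv.map (f : G →* H) {x y : G} (h : IsConjUpToInv x y) :
    IsConjUpToInv (f x) (f y) := by
  rcases h with h | h
  · exact Or.inl (f.map_isConj h)
  · exact Or.inr (by simpa using f.map_isConj h)

theorem isConjUpToInv_commutatorElement {x y x' y' : G} (hx : x' = x ∨ x' = x⁻¹)
    (hy : y' = y ∨ y' = y⁻¹) : IsConjUpToInv ⁅x, y⁆ ⁅x', y'⁆ := by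
  have hl (x y : G) : IsConjUpToInv ⁅x, y⁆ ⁅x⁻¹, y⁆ := by
    rw [commutatorElement_inv_left, ← commutatorElement_inv]
    exact (isConjUpToInv_inv_right.2 (.refl _)).trans (isConj_iff.2 ⟨x⁻¹, by group⟩).isConjUpToInv
  have hr (x y : G) : IsConjUpToInv ⁅x, y⁆ ⁅x, y⁻¹⁆ := by
    rw [commutatorElement_inv_right, ← commutatorElement_inv]
    exact (isConjUpToInv_inv_right.2 (.refl _)).trans (isConj_iff.2 ⟨y⁻¹, by group⟩).isConjUpToInv
  rcases hx with rfl | rfl <;> rcases hy with rfl | rfl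
  · exact .refl _
  · exact hr _ _
  · exact hl _ _
  · exact (hl _ _).trans (hr _ _)

end IsConjUpToInv

namespace FreeGroup

variable {α β : Type*}

local notation "‖" x "‖" => FreeGroup.norm x

theorem mk_singleton (ℓ : α × Bool) : mk [ℓ] = bif ℓ.2 then of ℓ.1 else (of ℓ.1)⁻¹ := by
  obtain ⟨i, _ | _⟩ := ℓ <;> simp [of, inv_mk, invRev]

theorem mk_singleton_ne_one (ℓ : α × Bool) : mk [ℓ] ≠ 1 := by
  obtain ⟨i, _ | _⟩ := ℓ <;> simp [mk_singleton]

theorem map_mk_singleton_flip {F : Type*} [FunLike F (FreeGroup α) (FreeGroup β)]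
    [MonoidHomClass F (FreeGroup α) (FreeGroup β)] (ψ : F) (ℓ : α × Bool) :
    ψ (mk [(ℓ.1, !ℓ.2)]) = (ψ (mk [ℓ]))⁻¹ := by
  obtain ⟨i, _ | _⟩ := ℓ <;> simp [mk_singleton]

theorem norm_map_mk_singleton [DecidableEq β] {F : Type*} [FunLike F (FreeGroup α) (FreeGroup β)]
    [MonoidHomClass F (FreeGroup α) (FreeGroup β)] (ψ : F) (ℓ : α × Bool) :
    ‖ψ (mk [ℓ])‖ = ‖ψ (of ℓ.1)‖ := by
  obtain ⟨i, _ | _⟩ := ℓ <;> simp [mk_singleton]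

theorem exists_eq_mk_singleton [DecidableEq α] {x : FreeGroup α} (hx : ‖x‖ = 1) :
    ∃ ℓ, x = mk [ℓ] := by
  obtain ⟨ℓ, hℓ⟩ := length_eq_one_iff.1 hx
  exact ⟨ℓ, by rw [← hℓ, mk_toWord]⟩

section Cancellation

variable [DecidableEq α]

theorem IsReduced.exists_cancel {U V : List (α × Bool)} (hU : IsReduced U) (hV : IsReduced V) :
    ∃ A S B, U = A ++ S ∧ V = invRev S ++ B ∧ IsReduced (A ++ B) := by
  induction V generalizing U with
  | nil => exact ⟨U, [], [], by simp, rfl, by simpa⟩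
  | cons q V ih =>
    rcases eq_nil_or_concat' U with rfl | ⟨U, p, rfl⟩
    · exact ⟨[], [], q :: V, rfl, rfl, hV⟩
    by_cases hpq : p = (q.1, !q.2)
    · obtain ⟨A, S, B, hU', hV', hAB⟩ :=
        ih (hU.infix ⟨[], [p], rfl⟩) (hV.infix ⟨[q], [], by simp⟩)
      exact ⟨A, S ++ [p], B, by simp [hU'], by simp [hV', invRev, hpq], hAB⟩
    · refine ⟨U ++ [p], [], q :: V, by simp, rfl, hU.append_overlap ?_ (by simp)⟩
      rw [singleton_append, isReduced_cons_cons]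
      refine ⟨fun h => ?_, hV⟩
      cases p; cases q; simp_all

theorem toWord_mul_of_cancel {u v : FreeGroup α} {A S B : List (α × Bool)}
    (hu : u.toWord = A ++ S) (hv : v.toWord = invRev S ++ B) (hAB : IsReduced (A ++ B)) :
    (u * v).toWord = A ++ B := by
  rw [← mk_toWord (x := u), ← mk_toWord (x := v), hu, hv, ← mul_mk, ← mul_mk, ← inv_mk,
    mul_assoc, mul_inv_cancel_left, mul_mk, toWord_mk, hAB.reduce_eq]

theorem exists_toWord_mul (u v : FreeGroup α) : ∃ A S B, u.toWord = A ++ S ∧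
    v.toWord = invRev S ++ B ∧ (u * v).toWord = A ++ B := by
  obtain ⟨A, S, B, hu, hv, hAB⟩ := isReduced_toWord.exists_cancel (isReduced_toWord (x := v))
  exact ⟨A, S, B, hu, hv, toWord_mul_of_cancel hu hv hAB⟩

/-- With `u = c r c⁻¹` and `r` cyclically reduced, `‖u‖ = 2‖c‖ + ‖r‖ ≤ 2‖c‖ + 2‖r‖ = ‖u * u‖`. -/
theorem norm_le_norm_mul_self (u : FreeGroup α) : ‖u‖ ≤ ‖u * u‖ := by
  open reduceCyclically in
  have h := congrArg length (conj_conjugator_reduceCyclically u.toWord)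
  have h2 := congrArg length (reduce_flatten_replicate (isReduced_toWord (x := u)) 2)
  rw [← sq]
  simp [norm, toWord_pow] at h h2 ⊢
  omega

/-- If neither cancellation in `u * v` and `v * w` exceeds half of `v` but together they cover
`v`, then `v = s⁻¹ * s'` is cancelled exactly half against `u = a * s` and half against
`w = s'⁻¹ * b`. -/
theorem exists_toWord_of_norm_mul_add_lt {u v w : FreeGroup α} (hvu : ‖v‖ ≤ ‖u * v‖)
    (huv : ‖u‖ ≤ ‖u * v‖) (hwv : ‖w‖ ≤ ‖v * w‖) (hlt : ‖u * v‖ + ‖v * w‖ < ‖u‖ + ‖w‖ + 2) :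
    ∃ A S S' B, u.toWord = A ++ S ∧ v.toWord = invRev S ++ S' ∧ w.toWord = invRev S' ++ B ∧
      S.length = S'.length ∧ S.length ≤ A.length := by
  obtain ⟨A, S, B, hu, hv, huv'⟩ := exists_toWord_mul u v
  obtain ⟨A', S', B', hv', hw, hvw'⟩ := exists_toWord_mul v w
  have hlen := congrArg length (hv.symm.trans hv')
  simp only [norm, hu, hv, hw, huv', hvw', length_append, invRev_length] at hvu huv hwv hlt hlen
  obtain ⟨-, rfl⟩ := append_inj' (hv.symm.trans hv') (by omega)
  exact ⟨A, S, B, B', hu, hv, hw, by omega, by omega⟩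

theorem norm_add_norm_add_two_le {u v w : FreeGroup α} (hv : v ≠ 1) (hvu : ‖v‖ ≤ ‖u * v‖)
    (huv : ‖u‖ ≤ ‖u * v‖) (hwv : ‖w‖ ≤ ‖v * w‖)
    (hcases : u = v ∨ w = v ∨ w = u ∨ w = u⁻¹)
    (hconj : w = u → u ≠ v → ∀ g, ‖u‖ + ‖v‖ ≤ ‖g * v * g⁻¹‖ + ‖g * (v * u) * g⁻¹‖) :
    ‖u‖ + ‖w‖ + 2 ≤ ‖u * v‖ + ‖v * w‖ := by
  by_contra! hlt
  obtain ⟨A, S, S', B, hu, hv', hw, hSS', hSA⟩ :=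
    exists_toWord_of_norm_mul_add_lt hvu huv hwv hlt
  have hS : S ≠ S' := by
    rintro rfl
    rw [← mk_toWord (x := v), hv', ← mul_mk, ← inv_mk, inv_mul_cancel] at hv
    exact hv rfl
  have hinv : invRev S ≠ invRev S' := invRev_injective.ne hS
  have hSS'' : (invRev S).length = (invRev S').length := by simpa using hSS'
  have hne : u ≠ v := fun h => hS (append_inj' ((h ▸ hu).symm.trans hv') hSS').2
  rcases hcases with h | rfl | rfl | rfl
  · exact hne h
  · exact hinv (append_inj (hv'.symm.trans hw) hSS'').1
  · -- `u = s'⁻¹ z s` and `v = s⁻¹ s'`: conjugating `(v, v * u)` by `s` gives `(s' s⁻¹, z)`,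
    -- which is shorter than `(v, u)`.
    obtain ⟨Z, hZ⟩ : invRev S' <+: A :=
      prefix_of_prefix_length_le ⟨B, hw.symm⟩ ⟨S, hu.symm⟩ (by simpa [hSS'] using hSA)
    have hw' : w = (mk S')⁻¹ * mk Z * mk S := by
      rw [← mk_toWord (x := w), hu, ← hZ, ← mul_mk, ← mul_mk, inv_mk]
    have hv'' : v = (mk S)⁻¹ * mk S' := by rw [← mk_toWord (x := v), hv', ← mul_mk, inv_mk]
    have hconj := hconj rfl hne (mk S)
    rw [show mk S * v * (mk S)⁻¹ = mk S' * (mk S)⁻¹ by rw [hv'']; group,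
      show mk S * (v * w) * (mk S)⁻¹ = mk Z by rw [hw', hv'']; group] at hconj
    have h₁ := norm_mul_le (mk S') (mk S)⁻¹
    have h₂ : S.length ≠ 0 := fun h => hS (by
      rw [length_eq_zero_iff.1 h, length_eq_zero_iff.1 (hSS'.symm.trans h)])
    have hwn : ‖w‖ = S'.length + Z.length + S.length := by simp [norm, hu, ← hZ, add_assoc]
    have hvn : ‖v‖ = S.length + S'.length := by simp [norm, hv']
    have := norm_mk_le (L₁ := S); have := norm_mk_le (L₁ := S'); have := norm_mk_le (L₁ := Z)
    rw [norm_inv_eq] at h₁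
    omega
  · rw [toWord_inv, hu, invRev_append] at hw
    exact hinv (append_inj hw hSS'').1

end Cancellation

section NielsenReduced

variable [DecidableEq β]

/-- Nielsen's conditions on the images of the letters under `ψ`, for letters that do not cancel
(`ℓ.1 = ℓ'.1 → ℓ.2 = ℓ'.2`). The last one says that in a product `u * v * w` of three such images
the two cancellations never exhaust the middle factor `v`. -/
structure IsNielsenReduced (ψ : FreeGroup α →* FreeGroup β) : Prop where
  intro ::
  ne_one (ℓ) : ψ (mk [ℓ]) ≠ 1
  norm_le_norm_mul (ℓ ℓ') : (ℓ.1 = ℓ'.1 → ℓ.2 = ℓ'.2) →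
    ‖ψ (mk [ℓ])‖ ≤ ‖ψ (mk [ℓ]) * ψ (mk [ℓ'])‖ ∧ ‖ψ (mk [ℓ'])‖ ≤ ‖ψ (mk [ℓ]) * ψ (mk [ℓ'])‖
  add_two_le (ℓ ℓ' ℓ'') : (ℓ.1 = ℓ'.1 → ℓ.2 = ℓ'.2) → (ℓ'.1 = ℓ''.1 → ℓ'.2 = ℓ''.2) →
    ‖ψ (mk [ℓ])‖ + ‖ψ (mk [ℓ''])‖ + 2 ≤
      ‖ψ (mk [ℓ]) * ψ (mk [ℓ'])‖ + ‖ψ (mk [ℓ']) * ψ (mk [ℓ''])‖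

variable {ψ : FreeGroup α →* FreeGroup β}

/-- The reduced word of `ψ (mk (W ++ [ℓ]))` ends with a piece `M` of the image of the last letter
that is longer than what any admissible next letter can cancel. -/
theorem IsNielsenReduced.exists_toWord_eq_append (hψ : IsNielsenReduced ψ)
    {W : List (α × Bool)} {ℓ : α × Bool} (hW : IsReduced (W ++ [ℓ])) :
    ∃ C M, (ψ (mk (W ++ [ℓ]))).toWord = C ++ M ∧ M <:+ (ψ (mk [ℓ])).toWord ∧
      W.length ≤ C.length ∧ ∀ ℓ', (ℓ.1 = ℓ'.1 → ℓ.2 = ℓ'.2) →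
        ‖ψ (mk [ℓ])‖ + ‖ψ (mk [ℓ'])‖ < ‖ψ (mk [ℓ]) * ψ (mk [ℓ'])‖ + 2 * M.length := by
  induction W using reverseRecOn generalizing ℓ with
  | nil =>
    refine ⟨[], (ψ (mk [ℓ])).toWord, rfl, suffix_refl _, le_rfl, fun ℓ' hℓ' => ?_⟩
    have := (hψ.norm_le_norm_mul ℓ ℓ' hℓ').2
    have := Nat.pos_of_ne_zero (mt norm_eq_zero.1 (hψ.ne_one ℓ))
    change _ < _ + 2 * ‖ψ (mk [ℓ])‖
    omega
  | append_singleton W ℓ₀ ih =>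
    obtain ⟨C, M, hC, hM, hWC, hlong⟩ := ih (hW.infix ⟨[], [ℓ], rfl⟩)
    have hℓ₀ : ℓ₀.1 = ℓ.1 → ℓ₀.2 = ℓ.2 := by
      simpa using (hW.infix (L₁ := [ℓ₀, ℓ]) ⟨W, [], by simp⟩)
    obtain ⟨A, S, B, hA, hB, hAB⟩ := exists_toWord_mul (ψ (mk [ℓ₀])) (ψ (mk [ℓ]))
    have hSM : S.length < M.length := by
      have := hlong ℓ hℓ₀
      simp only [norm, hA, hB, hAB, length_append, invRev_length] at this
      omega
    obtain ⟨E, hEM⟩ := hM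
    obtain ⟨T, rfl, rfl⟩ | ⟨T, -, rfl⟩ := append_eq_append_iff.1 (hEM.trans hA)
    · rw [length_append] at hSM
      have hT : T ≠ [] := by rintro rfl; simp at hSM
      have hCTB : IsReduced (C ++ T ++ B) := IsReduced.append_overlap
        ((hC ▸ isReduced_toWord).infix ⟨[], S, by simp⟩)
        ((hAB ▸ isReduced_toWord).infix ⟨E, [], by simp⟩) hT
      refine ⟨C ++ T, B, ?_, ⟨invRev S, hB.symm⟩, by simp; omega, fun ℓ' hℓ' => ?_⟩
      · rw [← mul_mk, _root_.map_mul]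
        exact toWord_mul_of_cancel (by simp [hC]) hB hCTB
      · have := hψ.add_two_le ℓ₀ ℓ ℓ' hℓ₀ hℓ'
        simp only [norm, hA, hB, hAB, length_append, invRev_length] at this ⊢
        omega
    · simp at hSM

theorem IsNielsenReduced.norm_le_norm_map [DecidableEq α] (hψ : IsNielsenReduced ψ)
    (w : FreeGroup α) : ‖w‖ ≤ ‖ψ w‖ := by
  rcases eq_nil_or_concat' w.toWord with hw | ⟨W, ℓ, hw⟩
  · simp [norm, hw]
  obtain ⟨C, M, hC, -, hWC, hlong⟩ := hψ.exists_toWord_eq_append (hw ▸ isReduced_toWord)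
  have h₁ := hlong ℓ fun _ => rfl
  have h₂ := norm_mul_le (ψ (mk [ℓ])) (ψ (mk [ℓ]))
  have hw' : ‖w‖ = W.length + 1 := by simp [norm, hw]
  have hψw : ‖ψ w‖ = C.length + M.length := by rw [← mk_toWord (x := w), hw]; simp [norm, hC]
  omega

end NielsenReduced

section Transvection

variable [DecidableEq α]

def transvectionHom (ℓ : α × Bool) : FreeGroup α →* FreeGroup α :=
  lift fun k => if k = ℓ.1 then of k else mk [ℓ] * of k

theorem transvectionHom_comp (ℓ : α × Bool) :
    (transvectionHom (ℓ.1, !ℓ.2)).comp (transvectionHom ℓ) = MonoidHom.id _ := by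
  ext k
  by_cases hk : k = ℓ.1
  · simp [transvectionHom, hk]
  · obtain ⟨i, _ | _⟩ := ℓ <;> simp_all [transvectionHom, mk_singleton]

def transvection (ℓ : α × Bool) : MulAut (FreeGroup α) :=
  (transvectionHom ℓ).toMulEquiv _ (transvectionHom_comp ℓ)
    (by simpa using transvectionHom_comp (ℓ.1, !ℓ.2))

theorem transvection_apply_of (ℓ : α × Bool) (k : α) :
    transvection ℓ (of k) = if k = ℓ.1 then of k else mk [ℓ] * of k := by
  simp [transvection, transvectionHom]

end Transvection

section Rank2

local notation "F₂" => FreeGroup (Fin 2)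

def commutatorClassStabilizer : Subgroup (MulAut F₂) where
  carrier := {ρ | IsConjUpToInv ⁅(of 0 : F₂), of 1⁆ (ρ ⁅(of 0 : F₂), of 1⁆)}
  one_mem' := .refl _
  mul_mem' {ρ σ} hρ hσ := hρ.trans (hσ.map ρ.toMonoidHom)
  inv_mem' {ρ} hρ := by simpa using (hρ.map (ρ⁻¹).toMonoidHom).symm

theorem mem_commutatorClassStabilizer {ρ : MulAut F₂} :
    ρ ∈ commutatorClassStabilizer ↔ IsConjUpToInv ⁅(of 0 : F₂), of 1⁆ (ρ ⁅(of 0 : F₂), of 1⁆) :=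
  Iff.rfl

theorem conj_mem_commutatorClassStabilizer (g : F₂) :
    MulAut.conj g ∈ commutatorClassStabilizer :=
  mem_commutatorClassStabilizer.2 (isConj_iff.2 ⟨g, rfl⟩).isConjUpToInv

theorem transvection_mem_commutatorClassStabilizer (ℓ : Fin 2 × Bool) :
    transvection ℓ ∈ commutatorClassStabilizer := by
  refine mem_commutatorClassStabilizer.2 (isConj_iff.2 ⟨mk [ℓ], ?_⟩).isConjUpToInv
  obtain ⟨i, _ | _⟩ := ℓ <;> fin_cases i <;>
    simp [transvection_apply_of, mk_singleton, commutatorElement_def] <;> group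

def basisLength (φ : MulAut F₂) : ℕ := ‖φ (of 0)‖ + ‖φ (of 1)‖

theorem basisLength_eq {i j : Fin 2} (h : i ≠ j) (φ : MulAut F₂) :
    basisLength φ = ‖φ (of i)‖ + ‖φ (of j)‖ := by
  fin_cases i <;> fin_cases j <;> simp_all [basisLength, add_comm]

theorem norm_add_norm_le_of_forall_le {φ : MulAut F₂}
    (hφ : ∀ ρ ∈ commutatorClassStabilizer, basisLength φ ≤ basisLength (φ * ρ))
    (g : F₂) {ℓ ℓ' : Fin 2 × Bool} (h : ℓ.1 ≠ ℓ'.1) :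
    ‖φ (mk [ℓ])‖ + ‖φ (mk [ℓ'])‖ ≤
      ‖g * φ (mk [ℓ]) * g⁻¹‖ + ‖g * (φ (mk [ℓ]) * φ (mk [ℓ'])) * g⁻¹‖ := by
  have key (g : F₂) (ℓ : Fin 2 × Bool) (j : Fin 2) (hj : j ≠ ℓ.1) :
      basisLength φ ≤ ‖g * φ (mk [ℓ]) * g⁻¹‖ + ‖g * (φ (mk [ℓ]) * φ (of j)) * g⁻¹‖ := by
    have := hφ _ (mul_mem (conj_mem_commutatorClassStabilizer (φ.symm g))
      (transvection_mem_commutatorClassStabilizer ℓ))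
    have hℓ := norm_map_mk_singleton (MulAut.conj g * φ) ℓ
    simp only [MulAut.mul_apply, MulAut.conj_apply] at hℓ
    simpa [basisLength_eq hj.symm, transvection_apply_of, hj, hℓ] using this
  rw [norm_map_mk_singleton, norm_map_mk_singleton, ← basisLength_eq h]
  obtain ⟨j, _ | _⟩ := ℓ'
  · -- up to inversion, `(u, u * x⁻¹)` is `(u⁻¹, u⁻¹ * x)` conjugated by `u`
    have := key (g * φ (mk [ℓ])) (ℓ.1, !ℓ.2) j h.symm
    rwa [map_mk_singleton_flip,
      show g * φ (mk [ℓ]) * (φ (mk [ℓ]))⁻¹ * (g * φ (mk [ℓ]))⁻¹ = (g * φ (mk [ℓ]) * g⁻¹)⁻¹ by group,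
      show g * φ (mk [ℓ]) * ((φ (mk [ℓ]))⁻¹ * φ (of j)) * (g * φ (mk [ℓ]))⁻¹ =
        (g * (φ (mk [ℓ]) * φ (mk [(j, false)])) * g⁻¹)⁻¹ by simp [mk_singleton]; group,
      norm_inv_eq, norm_inv_eq] at this
  · exact key g ℓ j h.symm

theorem norm_le_norm_mul_of_forall_le {φ : MulAut F₂}
    (hφ : ∀ ρ ∈ commutatorClassStabilizer, basisLength φ ≤ basisLength (φ * ρ))
    {ℓ ℓ' : Fin 2 × Bool} (hℓ : ℓ.1 = ℓ'.1 → ℓ.2 = ℓ'.2) :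
    ‖φ (mk [ℓ])‖ ≤ ‖φ (mk [ℓ]) * φ (mk [ℓ'])‖ ∧ ‖φ (mk [ℓ'])‖ ≤ ‖φ (mk [ℓ]) * φ (mk [ℓ'])‖ := by
  by_cases h : ℓ.1 = ℓ'.1
  · obtain rfl : ℓ = ℓ' := Prod.ext h (hℓ h)
    exact ⟨norm_le_norm_mul_self _, norm_le_norm_mul_self _⟩
  have h₁ := norm_add_norm_le_of_forall_le hφ 1 h
  have h₂ := norm_add_norm_le_of_forall_le hφ 1 (ℓ := (ℓ'.1, !ℓ'.2)) (ℓ' := (ℓ.1, !ℓ.2)) (Ne.symm h)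
  simp only [map_mk_singleton_flip, ← mul_inv_rev, norm_inv_eq, one_mul, inv_one, mul_one] at h₁ h₂
  omega

theorem isNielsenReduced_of_forall_le {φ : MulAut F₂}
    (hφ : ∀ ρ ∈ commutatorClassStabilizer, basisLength φ ≤ basisLength (φ * ρ)) :
    IsNielsenReduced φ.toMonoidHom := by
  refine ⟨fun ℓ => by simpa using mk_singleton_ne_one ℓ,
    fun _ _ => norm_le_norm_mul_of_forall_le hφ, fun ℓ ℓ' ℓ'' h₁ h₂ => ?_⟩
  simp only [MulEquiv.coe_toMonoidHom]
  refine norm_add_norm_add_two_le (by simpa using mk_singleton_ne_one ℓ')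
    (norm_le_norm_mul_of_forall_le hφ h₁).2 (norm_le_norm_mul_of_forall_le hφ h₁).1
    (norm_le_norm_mul_of_forall_le hφ h₂).2 ?_ ?_
  · by_cases h : ℓ.1 = ℓ'.1
    · exact Or.inl (by rw [Prod.ext h (h₁ h)])
    by_cases h' : ℓ''.1 = ℓ'.1
    · exact Or.inr (Or.inl (by rw [Prod.ext h' (h₂ h'.symm).symm]))
    obtain ⟨i, s⟩ := ℓ
    obtain ⟨k, t⟩ := ℓ''
    obtain rfl : k = i := by simp only at h h'; omega
    rcases Bool.eq_or_eq_not t s with rfl | rfl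
    · exact Or.inr (Or.inr (Or.inl rfl))
    · exact Or.inr (Or.inr (Or.inr (map_mk_singleton_flip φ (k, s))))
  · intro _ hne g
    have h : ℓ'.1 ≠ ℓ.1 := fun h => hne (by rw [Prod.ext h.symm (h₁ h.symm)])
    simpa [add_comm] using norm_add_norm_le_of_forall_le hφ g h

theorem mem_commutatorClassStabilizer_of_norm_eq_one {ψ : MulAut F₂} (h : ∀ i, ‖ψ (of i)‖ = 1) :
    ψ ∈ commutatorClassStabilizer := by
  obtain ⟨⟨i, s⟩, h₀⟩ := exists_eq_mk_singleton (h 0)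
  obtain ⟨⟨j, t⟩, h₁⟩ := exists_eq_mk_singleton (h 1)
  have hne : i ≠ j := by
    rintro rfl
    rcases Bool.eq_or_eq_not s t with rfl | rfl
    · exact absurd (ψ.injective (h₀.trans h₁.symm)) (by decide)
    · have := map_mk_singleton_flip (MonoidHom.id F₂) (i, t)
      rw [MonoidHom.id_apply, MonoidHom.id_apply, ← h₀, ← h₁, ← _root_.map_inv] at this
      exact absurd (ψ.injective this) (by decide)
  have hx (ℓ : Fin 2 × Bool) : mk [ℓ] = of ℓ.1 ∨ mk [ℓ] = (of ℓ.1)⁻¹ := by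
    obtain ⟨i, _ | _⟩ := ℓ <;> simp [mk_singleton]
  rw [mem_commutatorClassStabilizer, map_commutatorElement, h₀, h₁]
  obtain ⟨rfl, rfl⟩ | ⟨rfl, rfl⟩ : (i = 0 ∧ j = 1) ∨ (i = 1 ∧ j = 0) := by omega
  · exact isConjUpToInv_commutatorElement (hx _) (hx _)
  · rw [← commutatorElement_inv (mk [(0, t)])]
    exact isConjUpToInv_inv_right.2 (isConjUpToInv_commutatorElement (hx _) (hx _))

theorem mem_commutatorClassStabilizer_of_forall_le {φ : MulAut F₂}
    (hφ : ∀ ρ ∈ commutatorClassStabilizer, basisLength φ ≤ basisLength (φ * ρ)) :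
    φ ∈ commutatorClassStabilizer := by
  refine inv_mem_iff.1 (mem_commutatorClassStabilizer_of_norm_eq_one fun i => ?_)
  have h₁ := (isNielsenReduced_of_forall_le hφ).norm_le_norm_map (φ⁻¹ (of i))
  have h₂ : ‖φ⁻¹ (of i)‖ ≠ 0 := by simp
  simp only [MulEquiv.coe_toMonoidHom, MulAut.apply_inv_self, norm_of] at h₁
  omega

theorem commutatorClassStabilizer_eq_top : commutatorClassStabilizer = ⊤ := by
  refine eq_top_iff.2 fun φ _ => ?_
  induction h : basisLength φ using Nat.strong_induction_on generalizing φ with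
  | _ n ih =>
    by_cases hmin : ∀ ρ ∈ commutatorClassStabilizer, basisLength φ ≤ basisLength (φ * ρ)
    · exact mem_commutatorClassStabilizer_of_forall_le hmin
    push Not at hmin
    obtain ⟨ρ, hρ, hlt⟩ := hmin
    exact (Subgroup.mul_mem_cancel_right _ hρ).1 (ih _ (h ▸ hlt) _ trivial rfl)

end Rank2

end FreeGroup

/-- (Nielsen) Every automorphism of the free group `F₂ = ⟨a,b⟩` sends the
commutator `[a,b] = a·b·a⁻¹·b⁻¹` to a conjugate of itself or of its inverse
`[b,a]`. -/
theorem stmt12 (φ : MulAut (FreeGroup (Fin 2))) :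
    ∃ w : FreeGroup (Fin 2),
      φ (FreeGroup.of 0 * FreeGroup.of 1 * (FreeGroup.of 0)⁻¹ * (FreeGroup.of 1)⁻¹) =
        w * (FreeGroup.of 0 * FreeGroup.of 1 * (FreeGroup.of 0)⁻¹ * (FreeGroup.of 1)⁻¹) * w⁻¹ ∨
      φ (FreeGroup.of 0 * FreeGroup.of 1 * (FreeGroup.of 0)⁻¹ * (FreeGroup.of 1)⁻¹) =
        w * (FreeGroup.of 1 * FreeGroup.of 0 * (FreeGroup.of 1)⁻¹ * (FreeGroup.of 0)⁻¹) * w⁻¹ := by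
  have hφ : φ ∈ FreeGroup.commutatorClassStabilizer :=
    FreeGroup.commutatorClassStabilizer_eq_top ▸ Subgroup.mem_top φ
  rcases FreeGroup.mem_commutatorClassStabilizer.1 hφ with h | h <;>
    obtain ⟨w, hw⟩ := isConj_iff.1 h
  · exact ⟨w, Or.inl hw.symm⟩
  · rw [commutatorElement_inv] at hw
    exact ⟨w, Or.inr hw.symm⟩
end
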